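/- arXiv:math/0410103 — 3 statements merged into one kernel-verified Lean document; each statement's English description precedes it below -/
import Mathlib

section
/- Let γ ≥ 0 and n₀ ∈ ℕ* be such that 𝓜_{γ+1} < +∞ and 𝒞_{γ+1}^{(n₀)} < 1. For λ ∈ [0,1] set φ_λ(x) = d(x,x₀) p_λ(x)^γ with p_λ(x) = 1 + λ d(x,x₀) and δ_λ(g) = max{c(g),1} + λ d(g x₀, x₀). Then: (a) for all n ≥ 1 and x ∈ M, Pⁿφ_λ(x) < +∞; (b) there exists λ₀ ∈ (0,1] such that ∫_G c(g) δ_{λ₀}(g)^γ dπ^{*n₀}(g) < 1; (c) there exist constants ε ∈ (0,1) and C ≥ 0 such that P^{n₀} φ_{λ₀} ≤ C + ε φ_{λ₀} pointwise on M. -/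
open MeasureTheory ProbabilityTheory Filter Topology
open scoped ENNReal NNReal

noncomputable section

/-- `p_λ(x) = 1 + λ d(x,x₀)` -/
def pfun {M : Type*} [MetricSpace M] (x₀ : M) (lam : ℝ) (x : M) : ℝ :=
  1 + lam * dist x x₀

/-- `δ_λ(g) = max{c(g),1} + λ d(g x₀, x₀)` -/
def deltaFun {M G : Type*} [MetricSpace M] (x₀ : M) (act : G → M → M) (c : G → ℝ)
    (lam : ℝ) (g : G) : ℝ :=
  max (c g) 1 + lam * dist (act g x₀) x₀

/-- `δ̃(g) = 1 + c(g) + d(g x₀, x₀)` -/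
def deltaTilde {M G : Type*} [MetricSpace M] (x₀ : M) (act : G → M → M) (c : G → ℝ)
    (g : G) : ℝ :=
  1 + c g + dist (act g x₀) x₀

/-- the weight `Δ_γ(x,y) = d(x,y) p(x)^γ p(y)^γ` -/
def wDelta {M : Type*} [MetricSpace M] (x₀ : M) (lam γ : ℝ) (x y : M) : ℝ :=
  dist x y * pfun x₀ lam x ^ γ * pfun x₀ lam y ^ γ

/-- `m_γ(f)`, the best Lipschitz-type constant of `f` w.r.t. the weight `Δ_γ` -/
def mGam {M : Type*} [MetricSpace M] (x₀ : M) (lam γ : ℝ) (f : M → ℂ) : ℝ :=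
  sSup {ρ : ℝ | ∃ x y : M, x ≠ y ∧ ρ = ‖f x - f y‖ / wDelta x₀ lam γ x y}

/-- `|f|_η = sup_x |f(x)|/p(x)^{η+1}` -/
def nrmGam {M : Type*} [MetricSpace M] (x₀ : M) (lam η : ℝ) (f : M → ℂ) : ℝ :=
  sSup {ρ : ℝ | ∃ x : M, ρ = ‖f x‖ / pfun x₀ lam x ^ (η + 1)}

/-- membership in the space `𝓑_γ` -/
def memB {M : Type*} [MetricSpace M] (x₀ : M) (lam γ : ℝ) (f : M → ℂ) : Prop :=
  ∃ K : ℝ, ∀ x y : M, ‖f x - f y‖ ≤ K * wDelta x₀ lam γ x y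

/-- the norm `N_{∞,γ}` on `𝓑_γ` -/
def nInf {M : Type*} [MetricSpace M] (x₀ : M) (lam γ : ℝ) (f : M → ℂ) : ℝ :=
  mGam x₀ lam γ f + nrmGam x₀ lam γ f

/-- the Markov transition operator `P` acting on complex functions -/
def Pop {M G : Type*} [MeasurableSpace G] (π : Measure G) (act : G → M → M)
    (f : M → ℂ) (x : M) : ℂ :=
  ∫ g, f (act g x) ∂π

/-- the Markov transition operator `P` acting on real functions -/
def PopR {M G : Type*} [MeasurableSpace G] (π : Measure G) (act : G → M → M)
    (f : M → ℝ) (x : M) : ℝ :=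
  ∫ g, f (act g x) ∂π

/-- the Fourier kernel `P(t)` -/
def Pt {M G : Type*} [MeasurableSpace G] (π : Measure G) (act : G → M → M)
    (ξ : G → M → ℝ) (t : ℝ) (f : M → ℂ) (x : M) : ℂ :=
  ∫ g, Complex.exp (Complex.I * (t * ξ g x)) * f (act g x) ∂π

/-- the derivative kernels `L_k` -/
def Lk {M G : Type*} [MeasurableSpace G] (π : Measure G) (act : G → M → M)
    (ξ : G → M → ℝ) (k : ℕ) (f : M → ℂ) (x : M) : ℂ :=
  ∫ g, (Complex.I * (ξ g x : ℂ)) ^ k * f (act g x) ∂π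

/-- `piStar π n` is the convolution power `π^{*(n+1)}`, the law of `R_{n+1} = Y_{n+1} ⋯ Y₁`. -/
def piStar {G : Type*} [MeasurableSpace G] [Mul G] (π : Measure G) : ℕ → Measure G
  | 0 => π
  | n + 1 => Measure.map (fun q : G × G => q.1 * q.2) (π.prod (piStar π n))

/-- `ϑ₀ = ∫ c(g) δ_{λ₀}(g)^{2γ₀} dπ^{*n₀}(g)` (with `n₀` shifted by one). -/
def theta0 {M G : Type*} [MetricSpace M] [MeasurableSpace G] [Mul G] (x₀ : M)
    (act : G → M → M) (c : G → ℝ) (π : Measure G) (lam₀ γ₀ : ℝ) (n₀ : ℕ) : ℝ :=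
  ∫ g, c g * deltaFun x₀ act c lam₀ g ^ (2 * γ₀) ∂(piStar π n₀)

/-- `𝓙^τ(U,V)` as a lower integral. -/
def Jtau {M G : Type*} [MetricSpace M] [MeasurableSpace G] (x₀ : M) (act : G → M → M)
    (c : G → ℝ) (π : Measure G) (τ : ℝ) (U V : G → ℝ) : ℝ≥0∞ :=
  (∫⁻ g, ENNReal.ofReal (U g * (c g * deltaTilde x₀ act c g ^ (2 * τ))) ∂π) +
    ∫⁻ g, ENNReal.ofReal (V g * deltaTilde x₀ act c g ^ (τ + 1)) ∂π

/-- the random trajectory `Z_n`: `traj act Y Z n = R_n Z` where `R_n = Y_n ⋯ Y₁`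
(`Y k` stands for `Y_{k+1}`). -/
def traj {M G Ω : Type*} (act : G → M → M) (Y : ℕ → Ω → G) (Z : Ω → M) : ℕ → Ω → M
  | 0 => Z
  | n + 1 => fun ω => act (Y n ω) (traj act Y Z n ω)

/-- `S_n^Z = Σ_{k=1}^n ξ(Y_k, Z_{k-1})` -/
def Sn {M G Ω : Type*} (act : G → M → M) (ξ : G → M → ℝ) (Y : ℕ → Ω → G) (Z : Ω → M)
    (n : ℕ) (ω : Ω) : ℝ :=
  ∑ k ∈ Finset.range n, ξ (Y k ω) (traj act Y Z k ω)

/-- convergence in distribution, expressed through bounded continuous test functions -/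
def CvgInDist {Ω : Type*} [MeasurableSpace Ω] (P : Measure Ω) (X : ℕ → Ω → ℝ)
    (μ : Measure ℝ) : Prop :=
  ∀ f : ℝ → ℝ, Continuous f → (∃ C : ℝ, ∀ x, |f x| ≤ C) →
    Tendsto (fun n => ∫ ω, f (X n ω) ∂P) atTop (𝓝 (∫ x, f x ∂μ))

/-- the topological support of a measure -/
def msupport {M : Type*} [TopologicalSpace M] [MeasurableSpace M] (ν : Measure M) : Set M :=
  {x | ∀ U : Set M, IsOpen U → x ∈ U → 0 < ν U}

/-- the product `h* = h₁ ⋯ h_{k+1}` of a tuple of elements of the semigroup `G` -/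
def hstar {G : Type*} [Semigroup G] : ∀ {k : ℕ}, (Fin (k + 1) → G) → G
  | 0, h => h 0
  | _ + 1, h => h 0 * hstar (Fin.tail h)



section AuxLemmas

set_option linter.unusedSectionVars false

variable {M : Type*} [MetricSpace M] [MeasurableSpace M] [OpensMeasurableSpace M]
  {G : Type*} [Semigroup G] [MeasurableSpace G] [MeasurableMul₂ G]

lemma one_le_deltaTilde (x₀ : M) (act : G → M → M) (c : G → ℝ) (hc0 : ∀ g : G, 0 ≤ c g)
    (g : G) : 1 ≤ deltaTilde x₀ act c g := by
  have := hc0 g; have := dist_nonneg (x := act g x₀) (y := x₀)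
  unfold deltaTilde; linarith

lemma deltaTilde_submul (x₀ : M) (act : G → M → M)
    (hact : ∀ (g h : G) (x : M), act (g * h) x = act g (act h x))
    (c : G → ℝ) (hc0 : ∀ g : G, 0 ≤ c g)
    (hcLip : ∀ (g : G) (x y : M), dist (act g x) (act g y) ≤ c g * dist x y)
    (hcMin : ∀ (g : G) (K : ℝ), 0 ≤ K →
      (∀ x y : M, dist (act g x) (act g y) ≤ K * dist x y) → c g ≤ K)
    (g h : G) :
    deltaTilde x₀ act c (g * h) ≤ deltaTilde x₀ act c g * deltaTilde x₀ act c h := by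
  have hcgh : c (g * h) ≤ c g * c h := by
    refine hcMin (g * h) (c g * c h) (mul_nonneg (hc0 g) (hc0 h)) fun x y => ?_
    rw [hact, hact]
    calc dist (act g (act h x)) (act g (act h y)) ≤ c g * dist (act h x) (act h y) :=
          hcLip g _ _
      _ ≤ c g * (c h * dist x y) := mul_le_mul_of_nonneg_left (hcLip h x y) (hc0 g)
      _ = c g * c h * dist x y := by ring
  have hd : dist (act (g * h) x₀) x₀ ≤ c g * dist (act h x₀) x₀ + dist (act g x₀) x₀ := by
    rw [hact]
    calc dist (act g (act h x₀)) x₀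
        ≤ dist (act g (act h x₀)) (act g x₀) + dist (act g x₀) x₀ := dist_triangle _ _ _
      _ ≤ c g * dist (act h x₀) x₀ + dist (act g x₀) x₀ :=
          add_le_add (hcLip g _ _) le_rfl
  have h1 := hc0 g; have h2 := hc0 h
  have h3 : (0:ℝ) ≤ dist (act g x₀) x₀ := dist_nonneg
  have h4 : (0:ℝ) ≤ dist (act h x₀) x₀ := dist_nonneg
  unfold deltaTilde
  nlinarith [mul_nonneg h2 h3, mul_nonneg h3 h4]

lemma measurable_deltaTilde (x₀ : M) (act : G → M → M)
    (hactm : Measurable fun q : G × M => act q.1 q.2) (c : G → ℝ) (hcm : Measurable c) :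
    Measurable (deltaTilde x₀ act c) := by
  have hg : Measurable fun g : G => act g x₀ :=
    hactm.comp (measurable_id.prodMk measurable_const)
  exact (measurable_const.add hcm).add
    (((continuous_id.dist continuous_const).measurable).comp hg)

lemma measurable_act_pt (x₀ : M) (act : G → M → M)
    (hactm : Measurable fun q : G × M => act q.1 q.2) :
    Measurable fun g : G => act g x₀ :=
  hactm.comp (measurable_id.prodMk measurable_const)

lemma piStar_isProbability (π : Measure G) [IsProbabilityMeasure π] :
    ∀ n, IsProbabilityMeasure (piStar π n)
  | 0 => by rwa [piStar]
  | n + 1 => by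
    haveI := piStar_isProbability π n
    rw [piStar]
    exact Measure.isProbabilityMeasure_map measurable_mul.aemeasurable

lemma lintegral_deltaTilde_rpow_lt_top (x₀ : M) (act : G → M → M)
    (hact : ∀ (g h : G) (x : M), act (g * h) x = act g (act h x))
    (hactm : Measurable fun q : G × M => act q.1 q.2)
    (c : G → ℝ) (hcm : Measurable c) (hc0 : ∀ g : G, 0 ≤ c g)
    (hcLip : ∀ (g : G) (x y : M), dist (act g x) (act g y) ≤ c g * dist x y)
    (hcMin : ∀ (g : G) (K : ℝ), 0 ≤ K →
      (∀ x y : M, dist (act g x) (act g y) ≤ K * dist x y) → c g ≤ K)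
    (π : Measure G) [IsProbabilityMeasure π] (p : ℝ) (hp : 0 ≤ p)
    (h1 : ∫⁻ g, ENNReal.ofReal (deltaTilde x₀ act c g ^ p) ∂π < ⊤) :
    ∀ n, ∫⁻ g, ENNReal.ofReal (deltaTilde x₀ act c g ^ p) ∂(piStar π n) < ⊤ := by
  have hdm : Measurable (deltaTilde x₀ act c) := measurable_deltaTilde x₀ act hactm c hcm
  have hdnn : ∀ g : G, (0:ℝ) ≤ deltaTilde x₀ act c g := fun g =>
    le_trans zero_le_one (one_le_deltaTilde x₀ act c hc0 g)
  set F : G → ℝ≥0∞ := fun g => ENNReal.ofReal (deltaTilde x₀ act c g ^ p) with hF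
  have hFm : Measurable F := (hdm.pow measurable_const).ennreal_ofReal
  intro n
  induction n with
  | zero => rwa [piStar]
  | succ n ih =>
    haveI := piStar_isProbability π n
    rw [piStar, lintegral_map hFm measurable_mul]
    calc ∫⁻ q : G × G, F (q.1 * q.2) ∂(π.prod (piStar π n))
        ≤ ∫⁻ q : G × G, F q.1 * F q.2 ∂(π.prod (piStar π n)) := by
          refine lintegral_mono fun q => ?_
          rw [hF]
          simp only
          rw [← ENNReal.ofReal_mul (Real.rpow_nonneg (hdnn q.1) p)]
          refine ENNReal.ofReal_le_ofReal ?_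
          rw [← Real.mul_rpow (hdnn q.1) (hdnn q.2)]
          exact Real.rpow_le_rpow (hdnn _)
            (deltaTilde_submul x₀ act hact c hc0 hcLip hcMin q.1 q.2) hp
      _ = (∫⁻ g, F g ∂π) * ∫⁻ g, F g ∂(piStar π n) :=
          lintegral_prod_mul hFm.aemeasurable hFm.aemeasurable
      _ < ⊤ := ENNReal.mul_lt_top h1 ih

end AuxLemmas

set_option maxHeartbeats 1000000 in
/-- Lemma 4.2. Here `piStar π n` denotes `π^{*(n+1)}`, so the fixed
integer `n₀ + 1 ≥ 1` plays the role of the paper's `n₀`. -/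
theorem stmt1
    {M : Type*} [MetricSpace M] [ProperSpace M] [MeasurableSpace M] [BorelSpace M]
    {G : Type*} [Semigroup G] [MeasurableSpace G] [MeasurableMul₂ G]
    (x₀ : M) (act : G → M → M)
    (hact : ∀ (g h : G) (x : M), act (g * h) x = act g (act h x))
    (hactm : Measurable fun q : G × M => act q.1 q.2)
    (c : G → ℝ) (hcm : Measurable c)
    (hc0 : ∀ g : G, 0 ≤ c g)
    (hcLip : ∀ (g : G) (x y : M), dist (act g x) (act g y) ≤ c g * dist x y)
    (hcMin : ∀ (g : G) (K : ℝ), 0 ≤ K →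
      (∀ x y : M, dist (act g x) (act g y) ≤ K * dist x y) → c g ≤ K)
    (π : Measure G) [IsProbabilityMeasure π]
    (γ : ℝ) (hγ : 0 ≤ γ) (n₀ : ℕ)
    -- `𝓜_{γ+1} < ∞`
    (hM : ∫⁻ g, ENNReal.ofReal (deltaTilde x₀ act c g ^ (γ + 1)) ∂π < ⊤)
    -- `𝒞_{γ+1}^{(n₀)} < 1`
    (hC : ∫⁻ g, ENNReal.ofReal (c g * max (c g) 1 ^ γ) ∂(piStar π n₀) < 1) :
    -- (a) `Pⁿ φ_λ (x) < ∞` for all `n ≥ 1`, `x ∈ M`, `λ ∈ [0,1]`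
    (∀ lam : ℝ, 0 ≤ lam → lam ≤ 1 → ∀ (n : ℕ) (x : M),
      ∫⁻ g, ENNReal.ofReal (dist (act g x) x₀ * pfun x₀ lam (act g x) ^ γ)
          ∂(piStar π n) < ⊤) ∧
    -- (b) and (c)
    (∃ lam₀ : ℝ, 0 < lam₀ ∧ lam₀ ≤ 1 ∧
      (∫⁻ g, ENNReal.ofReal (c g * deltaFun x₀ act c lam₀ g ^ γ) ∂(piStar π n₀) < 1) ∧
      ∃ ε C : ℝ, 0 < ε ∧ ε < 1 ∧ 0 ≤ C ∧ ∀ x : M,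
        ∫⁻ g, ENNReal.ofReal (dist (act g x) x₀ * pfun x₀ lam₀ (act g x) ^ γ)
            ∂(piStar π n₀)
          ≤ ENNReal.ofReal (C + ε * (dist x x₀ * pfun x₀ lam₀ x ^ γ))) := by
  classical
  have hdm : Measurable (deltaTilde x₀ act c) := measurable_deltaTilde x₀ act hactm c hcm
  have hgm : Measurable fun g : G => act g x₀ := measurable_act_pt x₀ act hactm
  have hDm : Measurable fun g : G => dist (act g x₀) x₀ :=
    ((continuous_id.dist continuous_const).measurable).comp hgm
  have hd1 : ∀ g, (1:ℝ) ≤ deltaTilde x₀ act c g := one_le_deltaTilde x₀ act c hc0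
  have hdnn : ∀ g, (0:ℝ) ≤ deltaTilde x₀ act c g := fun g => le_trans zero_le_one (hd1 g)
  have hdne : ∀ g, deltaTilde x₀ act c g ≠ 0 := fun g => by have := hd1 g; intro h; linarith
  have hdpow : ∀ g, deltaTilde x₀ act c g ^ (γ + 1)
      = deltaTilde x₀ act c g * deltaTilde x₀ act c g ^ γ := fun g => by
    rw [Real.rpow_add_one (hdne g) γ]; ring
  have hMn : ∀ n, ∫⁻ g, ENNReal.ofReal (deltaTilde x₀ act c g ^ (γ + 1)) ∂(piStar π n) < ⊤ :=
    lintegral_deltaTilde_rpow_lt_top x₀ act hact hactm c hcm hc0 hcLip hcMin π (γ + 1)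
      (by linarith) hM
  have hdlm : ∀ lam : ℝ, Measurable (deltaFun x₀ act c lam) := fun lam => by
    unfold deltaFun
    exact (hcm.max measurable_const).add (measurable_const.mul hDm)
  -- basic facts about deltaFun
  have hdeltaFun_nonneg : ∀ (lam : ℝ), 0 ≤ lam → ∀ g, 0 ≤ deltaFun x₀ act c lam g := by
    intro lam h0 g
    have hD : (0:ℝ) ≤ dist (act g x₀) x₀ := dist_nonneg
    have h1 : (1:ℝ) ≤ max (c g) 1 := le_max_right _ _
    unfold deltaFun; nlinarith
  have hdelta_le : ∀ (lam : ℝ), 0 ≤ lam → lam ≤ 1 → ∀ g,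
      deltaFun x₀ act c lam g ≤ deltaTilde x₀ act c g := by
    intro lam h0 h1 g
    have hc := hc0 g
    have hD : (0:ℝ) ≤ dist (act g x₀) x₀ := dist_nonneg
    have hmx : max (c g) 1 ≤ 1 + c g := max_le (by linarith) (by linarith)
    unfold deltaFun deltaTilde; nlinarith
  have htri : ∀ (g : G) (x : M),
      dist (act g x) x₀ ≤ c g * dist x x₀ + dist (act g x₀) x₀ := by
    intro g x
    calc dist (act g x) x₀ ≤ dist (act g x) (act g x₀) + dist (act g x₀) x₀ :=
          dist_triangle _ _ _
      _ ≤ c g * dist x x₀ + dist (act g x₀) x₀ := add_le_add (hcLip g x x₀) le_rfl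
  constructor
  · -- part (a)
    intro lam hlam0 hlam1 n x
    have key : ∀ g : G, ENNReal.ofReal (dist (act g x) x₀ * pfun x₀ lam (act g x) ^ γ)
        ≤ ENNReal.ofReal (deltaTilde x₀ act c g ^ (γ + 1)) *
          ENNReal.ofReal ((2 + dist x x₀) ^ (γ + 1)) := by
      intro g
      have hd : (0:ℝ) ≤ dist x x₀ := dist_nonneg
      have ha0 : (0:ℝ) ≤ dist (act g x) x₀ := dist_nonneg
      have hDnn : (0:ℝ) ≤ dist (act g x₀) x₀ := dist_nonneg
      have ha := htri g x
      have hB : (0:ℝ) < deltaTilde x₀ act c g * (2 + dist x x₀) := by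
        have := hd1 g; nlinarith
      have ha2 : dist (act g x) x₀ ≤ deltaTilde x₀ act c g * (2 + dist x x₀) := by
        have hc := hc0 g; unfold deltaTilde at *; nlinarith
      have hp2 : pfun x₀ lam (act g x) ≤ deltaTilde x₀ act c g * (2 + dist x x₀) := by
        have hla : lam * dist (act g x) x₀ ≤ dist (act g x) x₀ := by nlinarith
        have hc := hc0 g
        unfold pfun deltaTilde at *
        nlinarith
      have hpnn : (0:ℝ) ≤ pfun x₀ lam (act g x) := by
        unfold pfun; nlinarith
      rw [← ENNReal.ofReal_mul (Real.rpow_nonneg (hdnn g) _)]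
      refine ENNReal.ofReal_le_ofReal ?_
      rw [← Real.mul_rpow (hdnn g) (by linarith), Real.rpow_add_one (ne_of_gt hB) γ]
      calc dist (act g x) x₀ * pfun x₀ lam (act g x) ^ γ
          ≤ (deltaTilde x₀ act c g * (2 + dist x x₀)) *
            (deltaTilde x₀ act c g * (2 + dist x x₀)) ^ γ :=
            mul_le_mul ha2 (Real.rpow_le_rpow hpnn hp2 hγ) (Real.rpow_nonneg hpnn _) hB.le
        _ = (deltaTilde x₀ act c g * (2 + dist x x₀)) ^ γ *
            (deltaTilde x₀ act c g * (2 + dist x x₀)) := by ring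
    calc ∫⁻ g, ENNReal.ofReal (dist (act g x) x₀ * pfun x₀ lam (act g x) ^ γ) ∂(piStar π n)
        ≤ ∫⁻ g, ENNReal.ofReal (deltaTilde x₀ act c g ^ (γ + 1)) *
            ENNReal.ofReal ((2 + dist x x₀) ^ (γ + 1)) ∂(piStar π n) := lintegral_mono key
      _ = (∫⁻ g, ENNReal.ofReal (deltaTilde x₀ act c g ^ (γ + 1)) ∂(piStar π n)) *
            ENNReal.ofReal ((2 + dist x x₀) ^ (γ + 1)) :=
          lintegral_mul_const' _ _ ENNReal.ofReal_ne_top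
      _ < ⊤ := ENNReal.mul_lt_top (hMn n) ENNReal.ofReal_lt_top
  · -- parts (b) and (c)
    haveI := piStar_isProbability π n₀
    have hMn₀ := hMn n₀
    -- pointwise domination
    have hbound : ∀ (lam : ℝ), 0 ≤ lam → lam ≤ 1 → ∀ g,
        ENNReal.ofReal (c g * deltaFun x₀ act c lam g ^ γ)
          ≤ ENNReal.ofReal (deltaTilde x₀ act c g ^ (γ + 1)) := by
      intro lam h0 h1 g
      refine ENNReal.ofReal_le_ofReal ?_
      rw [hdpow g]
      have hcle : c g ≤ deltaTilde x₀ act c g := by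
        have hD : (0:ℝ) ≤ dist (act g x₀) x₀ := dist_nonneg
        unfold deltaTilde; linarith
      exact mul_le_mul hcle
        (Real.rpow_le_rpow (hdeltaFun_nonneg lam h0 g) (hdelta_le lam h0 h1 g) hγ)
        (Real.rpow_nonneg (hdeltaFun_nonneg lam h0 g) _) (hdnn g)
    have hlamk0 : ∀ k : ℕ, (0:ℝ) < 1 / ((k:ℝ) + 1) := by
      intro k; positivity
    have hlamk1 : ∀ k : ℕ, (1:ℝ) / ((k:ℝ) + 1) ≤ 1 := by
      intro k
      rw [div_le_one (by positivity)]
      have : (0:ℝ) ≤ (k:ℝ) := Nat.cast_nonneg k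
      linarith
    have hfmeas : ∀ k : ℕ, Measurable fun g =>
        ENNReal.ofReal (c g * deltaFun x₀ act c (1 / ((k:ℝ) + 1)) g ^ γ) := fun k =>
      (hcm.mul ((hdlm _).pow measurable_const)).ennreal_ofReal
    have hlim : ∀ g : G, Tendsto
        (fun k : ℕ => ENNReal.ofReal (c g * deltaFun x₀ act c (1 / ((k:ℝ) + 1)) g ^ γ))
        atTop (𝓝 (ENNReal.ofReal (c g * max (c g) 1 ^ γ))) := by
      intro g
      have h0 : Tendsto (fun k : ℕ => 1 / ((k:ℝ) + 1)) atTop (𝓝 0) :=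
        tendsto_one_div_add_atTop_nhds_zero_nat
      have hbase : Tendsto (fun k : ℕ => deltaFun x₀ act c (1 / ((k:ℝ) + 1)) g) atTop
          (𝓝 (max (c g) 1)) := by
        have h2 := (h0.mul_const (dist (act g x₀) x₀)).const_add (max (c g) 1)
        simp only [zero_mul, add_zero] at h2
        simpa [deltaFun] using h2
      have hr : Tendsto (fun k : ℕ => deltaFun x₀ act c (1 / ((k:ℝ) + 1)) g ^ γ) atTop
          (𝓝 (max (c g) 1 ^ γ)) :=
        ((Real.continuousAt_rpow_const _ γ (Or.inr hγ)).tendsto).comp hbase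
      exact (ENNReal.continuous_ofReal.tendsto _).comp (hr.const_mul (c g))
    have htend := tendsto_lintegral_of_dominated_convergence
      (μ := piStar π n₀) (f := fun g => ENNReal.ofReal (c g * max (c g) 1 ^ γ))
      (fun g => ENNReal.ofReal (deltaTilde x₀ act c g ^ (γ + 1))) hfmeas
      (fun k => ae_of_all _ (hbound _ (hlamk0 k).le (hlamk1 k)))
      hMn₀.ne (ae_of_all _ hlim)
    obtain ⟨k, hk⟩ := (htend.eventually_lt_const hC).exists
    set lam₀ : ℝ := 1 / ((k:ℝ) + 1) with hlam₀def
    have hl0 : 0 < lam₀ := hlamk0 k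
    have hl1 : lam₀ ≤ 1 := hlamk1 k
    refine ⟨lam₀, hl0, hl1, hk, ?_⟩
    -- part (c)
    set ν := piStar π n₀ with hνdef
    set rhoT := ∫⁻ g, ENNReal.ofReal (c g * deltaFun x₀ act c lam₀ g ^ γ) ∂ν with hrhoTdef
    set KT := ∫⁻ g, ENNReal.ofReal (dist (act g x₀) x₀ * deltaFun x₀ act c lam₀ g ^ γ) ∂ν
      with hKTdef
    have hρlt : rhoT < 1 := hk
    have hKlt : KT < ⊤ := by
      refine lt_of_le_of_lt (lintegral_mono fun g => ?_) hMn₀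
      refine ENNReal.ofReal_le_ofReal ?_
      rw [hdpow g]
      have hDle : dist (act g x₀) x₀ ≤ deltaTilde x₀ act c g := by
        have hc := hc0 g; unfold deltaTilde; linarith
      exact mul_le_mul hDle
        (Real.rpow_le_rpow (hdeltaFun_nonneg lam₀ hl0.le g) (hdelta_le lam₀ hl0.le hl1 g) hγ)
        (Real.rpow_nonneg (hdeltaFun_nonneg lam₀ hl0.le g) _) (hdnn g)
    set ρ := rhoT.toReal with hρdef
    set K := KT.toReal with hKdef
    have hρnn : 0 ≤ ρ := ENNReal.toReal_nonneg
    have hKnn : 0 ≤ K := ENNReal.toReal_nonneg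
    have hrhoTne : rhoT ≠ ⊤ := (hρlt.trans ENNReal.one_lt_top).ne
    have hρ1 : ρ < 1 := by
      have h := (ENNReal.toReal_lt_toReal hrhoTne ENNReal.one_ne_top).mpr hρlt
      simpa using h
    have hrhoTeq : rhoT = ENNReal.ofReal ρ := (ENNReal.ofReal_toReal hrhoTne).symm
    have hKTeq : KT = ENNReal.ofReal K := (ENNReal.ofReal_toReal hKlt.ne).symm
    set η := (1 - ρ) / 2 with hηdef
    have hηpos : 0 < η := by rw [hηdef]; linarith
    set ε := ρ + η with hεdef
    set C := K * (1 + lam₀ * (K / η)) ^ γ with hCdef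
    have hC0 : 0 ≤ C := mul_nonneg hKnn (Real.rpow_nonneg (by positivity) _)
    refine ⟨ε, C, by rw [hεdef]; linarith, by rw [hεdef, hηdef]; linarith, hC0, fun x => ?_⟩
    have hd : (0:ℝ) ≤ dist x x₀ := dist_nonneg
    have hpx_pos : 0 < pfun x₀ lam₀ x := by unfold pfun; nlinarith
    have hpxγnn : (0:ℝ) ≤ pfun x₀ lam₀ x ^ γ := Real.rpow_nonneg hpx_pos.le _
    have point : ∀ g : G,
        ENNReal.ofReal (dist (act g x) x₀ * pfun x₀ lam₀ (act g x) ^ γ)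
          ≤ ENNReal.ofReal (c g * deltaFun x₀ act c lam₀ g ^ γ) *
              ENNReal.ofReal (dist x x₀ * pfun x₀ lam₀ x ^ γ)
            + ENNReal.ofReal (dist (act g x₀) x₀ * deltaFun x₀ act c lam₀ g ^ γ) *
              ENNReal.ofReal (pfun x₀ lam₀ x ^ γ) := by
      intro g
      have hδnn := hdeltaFun_nonneg lam₀ hl0.le g
      have hDnn : (0:ℝ) ≤ dist (act g x₀) x₀ := dist_nonneg
      have ha0 : (0:ℝ) ≤ dist (act g x) x₀ := dist_nonneg
      have ha := htri g x
      have hc := hc0 g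
      have hδγnn : (0:ℝ) ≤ deltaFun x₀ act c lam₀ g ^ γ := Real.rpow_nonneg hδnn _
      have hpgx : pfun x₀ lam₀ (act g x) ≤ deltaFun x₀ act c lam₀ g * pfun x₀ lam₀ x := by
        have h1 : (1:ℝ) ≤ max (c g) 1 := le_max_right _ _
        have h2 : c g ≤ max (c g) 1 := le_max_left _ _
        have hla := mul_le_mul_of_nonneg_left ha hl0.le
        unfold pfun deltaFun at *
        nlinarith [mul_le_mul_of_nonneg_right h2 (mul_nonneg hl0.le hd),
          mul_nonneg (mul_nonneg hl0.le hDnn) (mul_nonneg hl0.le hd)]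
      have hpgxnn : (0:ℝ) ≤ pfun x₀ lam₀ (act g x) := by
        unfold pfun; nlinarith [dist_nonneg (x := act g x) (y := x₀)]
      have real : dist (act g x) x₀ * pfun x₀ lam₀ (act g x) ^ γ ≤
          c g * deltaFun x₀ act c lam₀ g ^ γ * (dist x x₀ * pfun x₀ lam₀ x ^ γ)
          + dist (act g x₀) x₀ * deltaFun x₀ act c lam₀ g ^ γ * (pfun x₀ lam₀ x ^ γ) := by
        calc dist (act g x) x₀ * pfun x₀ lam₀ (act g x) ^ γ
            ≤ (c g * dist x x₀ + dist (act g x₀) x₀) *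
              (deltaFun x₀ act c lam₀ g * pfun x₀ lam₀ x) ^ γ :=
              mul_le_mul ha (Real.rpow_le_rpow hpgxnn hpgx hγ)
                (Real.rpow_nonneg hpgxnn _) (by positivity)
          _ = c g * deltaFun x₀ act c lam₀ g ^ γ * (dist x x₀ * pfun x₀ lam₀ x ^ γ)
              + dist (act g x₀) x₀ * deltaFun x₀ act c lam₀ g ^ γ * (pfun x₀ lam₀ x ^ γ) := by
              rw [Real.mul_rpow hδnn hpx_pos.le]; ring
      calc ENNReal.ofReal (dist (act g x) x₀ * pfun x₀ lam₀ (act g x) ^ γ)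
          ≤ ENNReal.ofReal (c g * deltaFun x₀ act c lam₀ g ^ γ *
              (dist x x₀ * pfun x₀ lam₀ x ^ γ)
            + dist (act g x₀) x₀ * deltaFun x₀ act c lam₀ g ^ γ * (pfun x₀ lam₀ x ^ γ)) :=
            ENNReal.ofReal_le_ofReal real
        _ = _ := by
            have e1 : ENNReal.ofReal (c g * deltaFun x₀ act c lam₀ g ^ γ *
                (dist x x₀ * pfun x₀ lam₀ x ^ γ))
                = ENNReal.ofReal (c g * deltaFun x₀ act c lam₀ g ^ γ) *
                  ENNReal.ofReal (dist x x₀ * pfun x₀ lam₀ x ^ γ) :=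
              ENNReal.ofReal_mul (mul_nonneg hc hδγnn)
            have e2 : ENNReal.ofReal (dist (act g x₀) x₀ * deltaFun x₀ act c lam₀ g ^ γ *
                pfun x₀ lam₀ x ^ γ)
                = ENNReal.ofReal (dist (act g x₀) x₀ * deltaFun x₀ act c lam₀ g ^ γ) *
                  ENNReal.ofReal (pfun x₀ lam₀ x ^ γ) :=
              ENNReal.ofReal_mul (mul_nonneg hDnn hδγnn)
            rw [ENNReal.ofReal_add (by positivity) (by positivity), e1, e2]
    have hm1 : Measurable fun g : G =>
        ENNReal.ofReal (c g * deltaFun x₀ act c lam₀ g ^ γ) :=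
      (hcm.mul ((hdlm _).pow measurable_const)).ennreal_ofReal
    have step : ∫⁻ g, ENNReal.ofReal (dist (act g x) x₀ * pfun x₀ lam₀ (act g x) ^ γ) ∂ν
        ≤ rhoT * ENNReal.ofReal (dist x x₀ * pfun x₀ lam₀ x ^ γ)
          + KT * ENNReal.ofReal (pfun x₀ lam₀ x ^ γ) := by
      calc ∫⁻ g, ENNReal.ofReal (dist (act g x) x₀ * pfun x₀ lam₀ (act g x) ^ γ) ∂ν
          ≤ ∫⁻ g, (ENNReal.ofReal (c g * deltaFun x₀ act c lam₀ g ^ γ) *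
              ENNReal.ofReal (dist x x₀ * pfun x₀ lam₀ x ^ γ)
            + ENNReal.ofReal (dist (act g x₀) x₀ * deltaFun x₀ act c lam₀ g ^ γ) *
              ENNReal.ofReal (pfun x₀ lam₀ x ^ γ)) ∂ν := lintegral_mono point
        _ = rhoT * ENNReal.ofReal (dist x x₀ * pfun x₀ lam₀ x ^ γ)
            + KT * ENNReal.ofReal (pfun x₀ lam₀ x ^ γ) := by
            rw [lintegral_add_left (hm1.mul_const _),
              lintegral_mul_const' _ _ ENNReal.ofReal_ne_top,
              lintegral_mul_const' _ _ ENNReal.ofReal_ne_top]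
    refine le_trans step ?_
    rw [hrhoTeq, hKTeq, ← ENNReal.ofReal_mul hρnn, ← ENNReal.ofReal_mul hKnn,
      ← ENNReal.ofReal_add (by positivity) (by positivity)]
    refine ENNReal.ofReal_le_ofReal ?_
    have hfinal : K * pfun x₀ lam₀ x ^ γ ≤ C + η * (dist x x₀ * pfun x₀ lam₀ x ^ γ) := by
      rcases le_or_gt (dist x x₀) (K / η) with hcase | hcase
      · have hple : pfun x₀ lam₀ x ≤ 1 + lam₀ * (K / η) := by
          unfold pfun; nlinarith
        have h2 : K * pfun x₀ lam₀ x ^ γ ≤ C := by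
          rw [hCdef]
          exact mul_le_mul_of_nonneg_left (Real.rpow_le_rpow hpx_pos.le hple hγ) hKnn
        nlinarith [mul_nonneg (mul_nonneg hηpos.le hd) hpxγnn]
      · have hKd : K ≤ η * dist x x₀ := by
          rw [div_lt_iff₀ hηpos] at hcase; linarith
        nlinarith [mul_le_mul_of_nonneg_right hKd hpxγnn]
    rw [hεdef]; nlinarith [hfinal]

end
end

section
/- (i) For 0 < γ < γ̃, the canonical embedding from (𝓑_γ, N_{∞,γ,γ̃}) into (𝓑_γ, |·|_{γ̃}) is a compact linear map (every sequence bounded for N_{∞,γ,γ̃} has a subsequence converging in the norm |·|_{γ̃}). (ii) For γ ∈ (0, γ₀], the canonical embedding from (𝓑_γ, N_{1,γ}) into (𝓑_γ, ν(|·|)) is compact. -/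
open MeasureTheory ProbabilityTheory Filter Topology
open scoped ENNReal NNReal

noncomputable section

namespace Stmt5Aux


variable {M : Type*} [MetricSpace M] {x₀ : M} {lam γ η : ℝ}

lemma one_le_pfun (hlam : 0 ≤ lam) (x : M) : 1 ≤ pfun x₀ lam x := by
  have := mul_nonneg hlam dist_nonneg (a := lam) (b := dist x x₀)
  simp [pfun]; linarith

lemma pfun_pos (hlam : 0 ≤ lam) (x : M) : 0 < pfun x₀ lam x :=
  lt_of_lt_of_le one_pos (one_le_pfun hlam x)

lemma pfun_base (hlam : 0 ≤ lam) : pfun x₀ lam x₀ = 1 := by simp [pfun]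

lemma one_le_pfun_rpow (hlam : 0 ≤ lam) (hγ : 0 ≤ γ) (x : M) :
    1 ≤ pfun x₀ lam x ^ γ :=
  Real.one_le_rpow (one_le_pfun hlam x) hγ

lemma pfun_rpow_pos (hlam : 0 ≤ lam) (x : M) : 0 < pfun x₀ lam x ^ γ :=
  Real.rpow_pos_of_pos (pfun_pos hlam x) γ

lemma wDelta_nonneg (hlam : 0 ≤ lam) (x y : M) : 0 ≤ wDelta x₀ lam γ x y := by
  have h1 := (pfun_rpow_pos (x₀ := x₀) (γ := γ) hlam x).le
  have h2 := (pfun_rpow_pos (x₀ := x₀) (γ := γ) hlam y).le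
  exact mul_nonneg (mul_nonneg dist_nonneg h1) h2

lemma wDelta_pos (hlam : 0 ≤ lam) {x y : M} (h : x ≠ y) : 0 < wDelta x₀ lam γ x y := by
  have h1 := pfun_rpow_pos (x₀ := x₀) (γ := γ) hlam x
  have h2 := pfun_rpow_pos (x₀ := x₀) (γ := γ) hlam y
  exact mul_pos (mul_pos (dist_pos.2 h) h1) h2

lemma wDelta_comm (x y : M) : wDelta x₀ lam γ x y = wDelta x₀ lam γ y x := by
  simp [wDelta, dist_comm]; ring

/-- `Δ(x,x₀) ≤ lam⁻¹ p(x)^{γ+1}` -/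
lemma wDelta_base_le (hlam : 0 < lam) (hγ : 0 ≤ γ) (x : M) :
    wDelta x₀ lam γ x x₀ ≤ lam⁻¹ * pfun x₀ lam x ^ (γ + 1) := by
  have hp := pfun_pos (x₀ := x₀) hlam.le x
  have h1 : pfun x₀ lam x ^ (γ + 1) = pfun x₀ lam x ^ γ * pfun x₀ lam x :=
    Real.rpow_add_one hp.ne' γ
  have hd : dist x x₀ ≤ lam⁻¹ * pfun x₀ lam x := by
    rw [le_inv_mul_iff₀ hlam]
    simp [pfun]
  calc wDelta x₀ lam γ x x₀ = dist x x₀ * pfun x₀ lam x ^ γ := by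
        simp [wDelta, pfun_base hlam.le, Real.one_rpow]
    _ ≤ (lam⁻¹ * pfun x₀ lam x) * pfun x₀ lam x ^ γ := by
        apply mul_le_mul_of_nonneg_right hd (pfun_rpow_pos hlam.le x).le
    _ = lam⁻¹ * pfun x₀ lam x ^ (γ + 1) := by rw [h1]; ring

section mGamFacts

variable {f : M → ℂ}

lemma mGam_set_bddAbove (h : memB x₀ lam γ f) (hlam : 0 ≤ lam) :
    BddAbove {ρ : ℝ | ∃ x y : M, x ≠ y ∧ ρ = ‖f x - f y‖ / wDelta x₀ lam γ x y} := by
  obtain ⟨K, hK⟩ := h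
  refine ⟨max K 0, ?_⟩
  rintro ρ ⟨x, y, hxy, rfl⟩
  have hw := wDelta_pos (x₀ := x₀) (γ := γ) hlam hxy
  rw [div_le_iff₀ hw]
  calc ‖f x - f y‖ ≤ K * wDelta x₀ lam γ x y := hK x y
    _ ≤ max K 0 * wDelta x₀ lam γ x y := by
        apply mul_le_mul_of_nonneg_right (le_max_left _ _) hw.le

lemma norm_sub_le_mGam_mul (h : memB x₀ lam γ f) (hlam : 0 ≤ lam) (x y : M) :
    ‖f x - f y‖ ≤ mGam x₀ lam γ f * wDelta x₀ lam γ x y := by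
  rcases eq_or_ne x y with rfl | hxy
  · simp [wDelta]
  · have hw := wDelta_pos (x₀ := x₀) (γ := γ) hlam hxy
    have hmem : ‖f x - f y‖ / wDelta x₀ lam γ x y ∈
        {ρ : ℝ | ∃ x y : M, x ≠ y ∧ ρ = ‖f x - f y‖ / wDelta x₀ lam γ x y} :=
      ⟨x, y, hxy, rfl⟩
    have := le_csSup (mGam_set_bddAbove h hlam) hmem
    rw [div_le_iff₀ hw] at this
    exact this

lemma mGam_nonneg (h : memB x₀ lam γ f) (hlam : 0 ≤ lam) : 0 ≤ mGam x₀ lam γ f := by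
  rcases Set.eq_empty_or_nonempty
      {ρ : ℝ | ∃ x y : M, x ≠ y ∧ ρ = ‖f x - f y‖ / wDelta x₀ lam γ x y} with he | hne
  · rw [mGam, he, Real.sSup_empty]
  · obtain ⟨ρ, hρ⟩ := hne
    obtain ⟨x, y, hxy, rfl⟩ := hρ
    have h0 : (0:ℝ) ≤ ‖f x - f y‖ / wDelta x₀ lam γ x y :=
      div_nonneg (norm_nonneg _) (wDelta_nonneg hlam x y)
    exact h0.trans (le_csSup (mGam_set_bddAbove h hlam) ⟨x, y, hxy, rfl⟩)

lemma mGam_le {K : ℝ} (hK : 0 ≤ K) (hlam : 0 ≤ lam)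
    (h : ∀ x y : M, ‖f x - f y‖ ≤ K * wDelta x₀ lam γ x y) : mGam x₀ lam γ f ≤ K := by
  apply Real.sSup_le _ hK
  rintro ρ ⟨x, y, hxy, rfl⟩
  rw [div_le_iff₀ (wDelta_pos (x₀ := x₀) (γ := γ) hlam hxy)]
  exact h x y

end mGamFacts

section nrmFacts

variable {f : M → ℂ}

lemma pfun_rpow_mono (hlam : 0 ≤ lam) (x : M) {a b : ℝ} (hab : a ≤ b) :
    pfun x₀ lam x ^ a ≤ pfun x₀ lam x ^ b :=
  Real.rpow_le_rpow_of_exponent_le (one_le_pfun hlam x) hab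

lemma nrm_ratio_le (h : memB x₀ lam γ f) (hlam : 0 < lam) (hγ : 0 ≤ γ) (hγη : γ ≤ η)
    (x : M) : ‖f x‖ / pfun x₀ lam x ^ (η + 1) ≤ ‖f x₀‖ + mGam x₀ lam γ f * lam⁻¹ := by
  have hp1 : (1:ℝ) ≤ pfun x₀ lam x ^ (η + 1) :=
    one_le_pfun_rpow hlam.le (by linarith) x
  have hm0 := mGam_nonneg h hlam.le
  have hkey : ‖f x‖ ≤ (‖f x₀‖ + mGam x₀ lam γ f * lam⁻¹) * pfun x₀ lam x ^ (η + 1) := by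
    have h1 : ‖f x‖ ≤ ‖f x₀‖ + ‖f x - f x₀‖ := by
      have := norm_sub_le_norm_sub_add_norm_sub (f x) (f x₀) 0
      simpa [norm_sub_rev] using (norm_le_insert' (f x) (f x₀)).trans (le_refl _)
    have h2 : ‖f x - f x₀‖ ≤ mGam x₀ lam γ f * (lam⁻¹ * pfun x₀ lam x ^ (γ + 1)) :=
      (norm_sub_le_mGam_mul h hlam.le x x₀).trans
        (mul_le_mul_of_nonneg_left (wDelta_base_le hlam hγ x) hm0)
    have h3 : pfun x₀ lam x ^ (γ + 1) ≤ pfun x₀ lam x ^ (η + 1) :=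
      pfun_rpow_mono hlam.le x (by linarith)
    have h4 : ‖f x‖ ≤ ‖f x₀‖ + mGam x₀ lam γ f * lam⁻¹ * pfun x₀ lam x ^ (η + 1) := by
      have := mul_le_mul_of_nonneg_left h3
        (mul_nonneg hm0 (inv_nonneg.2 hlam.le))
      nlinarith [this, h1, h2]
    calc ‖f x‖ ≤ ‖f x₀‖ + mGam x₀ lam γ f * lam⁻¹ * pfun x₀ lam x ^ (η + 1) := h4
      _ ≤ (‖f x₀‖ + mGam x₀ lam γ f * lam⁻¹) * pfun x₀ lam x ^ (η + 1) := by
          have hb : 0 ≤ ‖f x₀‖ := norm_nonneg _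
          nlinarith [hp1, hb]
  rw [div_le_iff₀ (lt_of_lt_of_le one_pos hp1)]
  exact hkey

lemma nrm_set_bddAbove (h : memB x₀ lam γ f) (hlam : 0 < lam) (hγ : 0 ≤ γ) (hγη : γ ≤ η) :
    BddAbove {ρ : ℝ | ∃ x : M, ρ = ‖f x‖ / pfun x₀ lam x ^ (η + 1)} := by
  refine ⟨‖f x₀‖ + mGam x₀ lam γ f * lam⁻¹, ?_⟩
  rintro ρ ⟨x, rfl⟩
  exact nrm_ratio_le h hlam hγ hγη x

lemma norm_le_nrmGam_mul (h : memB x₀ lam γ f) (hlam : 0 < lam) (hγ : 0 ≤ γ) (hγη : γ ≤ η)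
    (x : M) : ‖f x‖ ≤ nrmGam x₀ lam η f * pfun x₀ lam x ^ (η + 1) := by
  have hp : (0:ℝ) < pfun x₀ lam x ^ (η + 1) := pfun_rpow_pos (x₀ := x₀) hlam.le x
  have := le_csSup (nrm_set_bddAbove h hlam hγ hγη) (⟨x, rfl⟩ :
    ‖f x‖ / pfun x₀ lam x ^ (η + 1) ∈
      {ρ : ℝ | ∃ x : M, ρ = ‖f x‖ / pfun x₀ lam x ^ (η + 1)})
  rw [div_le_iff₀ hp] at this
  exact this

lemma nrmGam_nonneg (h : memB x₀ lam γ f) (hlam : 0 < lam) (hγ : 0 ≤ γ) (hγη : γ ≤ η)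
    (z : M) : 0 ≤ nrmGam x₀ lam η f := by
  have h0 : (0:ℝ) ≤ ‖f z‖ / pfun x₀ lam z ^ (η + 1) :=
    div_nonneg (norm_nonneg _) (pfun_rpow_pos (x₀ := x₀) hlam.le z).le
  exact h0.trans (le_csSup (nrm_set_bddAbove h hlam hγ hγη) ⟨z, rfl⟩)

lemma nrmGam_le {C : ℝ} (hC : 0 ≤ C) (hlam : 0 ≤ lam)
    (h : ∀ x : M, ‖f x‖ ≤ C * pfun x₀ lam x ^ (η + 1)) : nrmGam x₀ lam η f ≤ C := by
  apply Real.sSup_le _ hC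
  rintro ρ ⟨x, rfl⟩
  rw [div_le_iff₀ (pfun_rpow_pos (x₀ := x₀) hlam x)]
  exact h x

end nrmFacts

section continuity

lemma continuous_of_lip {f : M → ℂ} {K : ℝ} (hlam : 0 ≤ lam) (hγ : 0 ≤ γ)
    (h : ∀ x y : M, ‖f x - f y‖ ≤ K * wDelta x₀ lam γ x y) : Continuous f := by
  rw [continuous_iff_continuousAt]
  intro z
  rw [Metric.continuousAt_iff]
  intro ε hε
  set B : ℝ := (pfun x₀ lam z + lam) ^ γ with hB
  have hB1 : (1:ℝ) ≤ B := Real.one_le_rpow (by have := one_le_pfun (x₀ := x₀) hlam z; linarith) hγ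
  set K' : ℝ := max K 0 * B * B + 1 with hK'
  have hK'pos : 0 < K' := by positivity
  refine ⟨min 1 (ε / K'), lt_min one_pos (div_pos hε hK'pos), ?_⟩
  intro y hy
  have hy1 : dist y z < 1 := lt_of_lt_of_le hy (min_le_left _ _)
  have hy2 : dist y z < ε / K' := lt_of_lt_of_le hy (min_le_right _ _)
  have hpy : pfun x₀ lam y ≤ pfun x₀ lam z + lam := by
    simp only [pfun]
    have hd : dist y x₀ ≤ dist z x₀ + 1 := by
      have := dist_triangle y z x₀
      linarith
    nlinarith [hlam, hd]
  have hpyB : pfun x₀ lam y ^ γ ≤ B :=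
    Real.rpow_le_rpow (pfun_pos (x₀ := x₀) hlam y).le hpy hγ
  have hpzB : pfun x₀ lam z ^ γ ≤ B := by
    apply Real.rpow_le_rpow (pfun_pos (x₀ := x₀) hlam z).le _ hγ
    linarith
  have hw : wDelta x₀ lam γ y z ≤ dist y z * B * B := by
    unfold wDelta
    have h1 := (pfun_rpow_pos (x₀ := x₀) (γ := γ) hlam y).le
    have h2 := (pfun_rpow_pos (x₀ := x₀) (γ := γ) hlam z).le
    have hd0 : (0:ℝ) ≤ dist y z := dist_nonneg
    calc dist y z * pfun x₀ lam y ^ γ * pfun x₀ lam z ^ γ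
        ≤ dist y z * B * pfun x₀ lam z ^ γ :=
          mul_le_mul_of_nonneg_right (mul_le_mul_of_nonneg_left hpyB hd0) h2
      _ ≤ dist y z * B * B := by
          apply mul_le_mul_of_nonneg_left hpzB
          have : (0:ℝ) ≤ B := by linarith
          positivity
  rw [dist_eq_norm]
  calc ‖f y - f z‖ ≤ K * wDelta x₀ lam γ y z := h y z
    _ ≤ max K 0 * (dist y z * B * B) := by
        have hw0 := wDelta_nonneg (x₀ := x₀) (γ := γ) hlam y z
        have : K * wDelta x₀ lam γ y z ≤ max K 0 * wDelta x₀ lam γ y z :=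
          mul_le_mul_of_nonneg_right (le_max_left _ _) hw0
        refine this.trans ?_
        apply mul_le_mul_of_nonneg_left hw (le_max_right _ _)
    _ = max K 0 * B * B * dist y z := by ring
    _ ≤ K' * dist y z := by
        apply mul_le_mul_of_nonneg_right _ dist_nonneg
        rw [hK']; linarith
    _ < K' * (ε / K') := by
        exact mul_lt_mul_of_pos_left hy2 hK'pos
    _ = ε := by field_simp

lemma continuous_of_memB {f : M → ℂ} (hlam : 0 ≤ lam) (hγ : 0 ≤ γ)
    (h : memB x₀ lam γ f) : Continuous f := by
  obtain ⟨K, hK⟩ := h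
  exact continuous_of_lip hlam hγ hK

end continuity

section extraction

lemma wDelta_le_bnd (hlam : 0 ≤ lam) {x y : M} {δ b : ℝ} (hb : 0 ≤ b) (hδ : 0 ≤ δ)
    (hd : dist x y ≤ δ) (hx : pfun x₀ lam x ^ γ ≤ b) (hy : pfun x₀ lam y ^ γ ≤ b) :
    wDelta x₀ lam γ x y ≤ δ * b * b := by
  have h1 := (pfun_rpow_pos (x₀ := x₀) (γ := γ) hlam x).le
  have h2 := (pfun_rpow_pos (x₀ := x₀) (γ := γ) hlam y).le
  calc wDelta x₀ lam γ x y = dist x y * pfun x₀ lam x ^ γ * pfun x₀ lam y ^ γ := rfl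
    _ ≤ δ * b * pfun x₀ lam y ^ γ := by
        apply mul_le_mul_of_nonneg_right _ h2
        exact mul_le_mul hd hx h1 hδ
    _ ≤ δ * b * b := mul_le_mul_of_nonneg_left hy (mul_nonneg hδ hb)

lemma pfun_rpow_le_of_dist_le (hlam : 0 ≤ lam) (hγ : 0 ≤ γ) {x : M} {r : ℝ}
    (hr : dist x x₀ ≤ r) : pfun x₀ lam x ^ γ ≤ (1 + lam * r) ^ γ := by
  apply Real.rpow_le_rpow (pfun_pos (x₀ := x₀) hlam x).le _ hγ
  simp only [pfun]
  nlinarith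

lemma extraction {M : Type*} [MetricSpace M] [ProperSpace M] [Nonempty M] (x₀ : M)
    {lam γ : ℝ} (hlam : 0 < lam) (hγ : 0 < γ) (u : ℕ → M → ℂ) {Cb : ℝ} (hCb : 0 ≤ Cb)
    (hlip : ∀ n x y, ‖u n x - u n y‖ ≤ Cb * wDelta x₀ lam γ x y)
    (hpt : ∀ x : M, ∃ R : ℝ, ∀ n, ‖u n x‖ ≤ R) :
    ∃ f : M → ℂ, (∀ x y, ‖f x - f y‖ ≤ Cb * wDelta x₀ lam γ x y) ∧
      ∃ φ : ℕ → ℕ, StrictMono φ ∧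
        (∀ x, Tendsto (fun n => u (φ n) x) atTop (𝓝 (f x))) ∧
        ∀ R ε : ℝ, 0 < ε → ∀ᶠ n in atTop, ∀ x ∈ Metric.closedBall x₀ R,
          ‖u (φ n) x - f x‖ ≤ ε := by
  obtain ⟨e, he⟩ := TopologicalSpace.exists_dense_seq M
  choose R hR using fun k => hpt (e k)
  -- seq compactness in the product space
  set S : Set (ℕ → ℂ) := {v | ∀ k, v k ∈ Metric.closedBall 0 (R k)} with hS
  have hScomp : IsCompact S := isCompact_pi_infinite fun k => isCompact_closedBall (0:ℂ) (R k)
  have hmem : ∀ n, (fun k => u n (e k)) ∈ S := by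
    intro n k
    rw [Metric.mem_closedBall, dist_zero_right]
    exact hR k n
  obtain ⟨w, hwS, φ, hφ, hwt⟩ := hScomp.isSeqCompact.subseq_of_frequently_in
    (Frequently.of_forall hmem)
  have hwk : ∀ k, Tendsto (fun n => u (φ n) (e k)) atTop (𝓝 (w k)) := by
    intro k
    exact (tendsto_pi_nhds.1 hwt) k
  -- Cauchy at every point
  have hcauchy : ∀ x : M, CauchySeq (fun n => u (φ n) x) := by
    intro x
    rw [Metric.cauchySeq_iff]
    intro ε hε
    set b : ℝ := pfun x₀ lam x ^ γ * (1 + lam * (dist x x₀ + 1)) ^ γ with hb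
    have hb0 : 0 < b := by
      apply mul_pos (pfun_rpow_pos (x₀ := x₀) hlam.le x)
      apply Real.rpow_pos_of_pos
      nlinarith [dist_nonneg (x := x) (y := x₀), hlam]
    have h8 : (0:ℝ) < 8 * Cb * b + 1 := by nlinarith [mul_nonneg hCb hb0.le]
    set δ : ℝ := min 1 (ε / (8 * Cb * b + 1)) with hδ
    have hδ0 : 0 < δ := lt_min one_pos (div_pos hε h8)
    obtain ⟨k, hk⟩ := he.exists_dist_lt x hδ0
    have hdk : dist x (e k) < δ := hk
    have hwd : wDelta x₀ lam γ x (e k) ≤ δ * b := by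
      have hpk : pfun x₀ lam (e k) ^ γ ≤ (1 + lam * (dist x x₀ + 1)) ^ γ := by
        apply pfun_rpow_le_of_dist_le hlam.le hγ.le
        have := dist_triangle (e k) x x₀
        have hδ1 : δ ≤ 1 := min_le_left _ _
        rw [dist_comm (e k) x] at this
        linarith
      calc wDelta x₀ lam γ x (e k)
          = dist x (e k) * pfun x₀ lam x ^ γ * pfun x₀ lam (e k) ^ γ := rfl
        _ ≤ δ * pfun x₀ lam x ^ γ * (1 + lam * (dist x x₀ + 1)) ^ γ := by
            apply mul_le_mul
            · exact mul_le_mul hdk.le le_rfl (pfun_rpow_pos (x₀ := x₀) hlam.le x).le hδ0.le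
            · exact hpk
            · exact (pfun_rpow_pos (x₀ := x₀) hlam.le (e k)).le
            · exact mul_nonneg hδ0.le (pfun_rpow_pos (x₀ := x₀) hlam.le x).le
        _ = δ * b := by rw [hb]; ring
    have hcv : CauchySeq (fun n => u (φ n) (e k)) := (hwk k).cauchySeq
    rw [Metric.cauchySeq_iff] at hcv
    obtain ⟨N, hN⟩ := hcv (ε/2) (by linarith)
    refine ⟨N, fun m hm n hn => ?_⟩
    have h1 : ‖u (φ m) x - u (φ n) x‖ ≤
        ‖u (φ m) x - u (φ m) (e k)‖ + ‖u (φ m) (e k) - u (φ n) (e k)‖ +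
          ‖u (φ n) (e k) - u (φ n) x‖ := by
      have := norm_add₃_le (a := u (φ m) x - u (φ m) (e k))
        (b := u (φ m) (e k) - u (φ n) (e k)) (c := u (φ n) (e k) - u (φ n) x)
      simpa using this
    have h2 : ‖u (φ m) x - u (φ m) (e k)‖ ≤ Cb * (δ * b) :=
      (hlip _ _ _).trans (mul_le_mul_of_nonneg_left hwd hCb)
    have h3 : ‖u (φ n) (e k) - u (φ n) x‖ ≤ Cb * (δ * b) := by
      refine (hlip _ _ _).trans ?_
      rw [wDelta_comm]
      exact mul_le_mul_of_nonneg_left hwd hCb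
    have h4 : ‖u (φ m) (e k) - u (φ n) (e k)‖ < ε/2 := by
      rw [← dist_eq_norm]
      exact hN m hm n hn
    have h5 : Cb * (δ * b) ≤ ε / 8 := by
      have hδ2 : δ ≤ ε / (8 * Cb * b + 1) := min_le_right _ _
      calc Cb * (δ * b) ≤ Cb * (ε / (8 * Cb * b + 1) * b) := by
            apply mul_le_mul_of_nonneg_left _ hCb
            exact mul_le_mul_of_nonneg_right hδ2 hb0.le
        _ = Cb * b * ε / (8 * Cb * b + 1) := by ring
        _ ≤ ε / 8 := by
            rw [div_le_div_iff₀ h8 (by norm_num : (0:ℝ) < 8)]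
            nlinarith [hε.le, mul_nonneg hCb hb0.le]
    rw [dist_eq_norm]
    calc ‖u (φ m) x - u (φ n) x‖ ≤ Cb * (δ * b) + ε/2 + Cb * (δ * b) := by linarith
      _ ≤ ε/8 + ε/2 + ε/8 := by linarith
      _ < ε := by linarith
  have hconv : ∀ x : M, ∃ L : ℂ, Tendsto (fun n => u (φ n) x) atTop (𝓝 L) :=
    fun x => cauchySeq_tendsto_of_complete (hcauchy x)
  choose f hf using hconv
  refine ⟨f, ?_, φ, hφ, hf, ?_⟩
  · -- Lipschitz bound for the limit
    intro x y
    have ht : Tendsto (fun n => ‖u (φ n) x - u (φ n) y‖) atTop (𝓝 ‖f x - f y‖) :=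
      ((hf x).sub (hf y)).norm
    exact le_of_tendsto ht (Eventually.of_forall fun n => hlip _ _ _)
  · -- uniform convergence on closed balls
    intro Rad ε hε
    rcases le_or_gt 0 Rad with hRad | hRad
    swap
    · filter_upwards with n x hx
      rw [Metric.mem_closedBall] at hx
      exact absurd (dist_nonneg.trans hx) (not_le.2 hRad)
    set b : ℝ := (1 + lam * (Rad + 1)) ^ γ with hb
    have hb0 : 0 < b := Real.rpow_pos_of_pos (by nlinarith) γ
    have h6 : (0:ℝ) < 6 * Cb * (b * b) + 1 := by
      nlinarith [mul_nonneg hCb (mul_nonneg hb0.le hb0.le)]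
    set δ : ℝ := min 1 (ε / (6 * Cb * (b * b) + 1)) with hδ
    have hδ0 : 0 < δ := lt_min one_pos (div_pos hε h6)
    have hδ1 : δ ≤ 1 := min_le_left _ _
    -- cover the closed ball by finitely many δ-balls centred at points of the dense sequence
    have hcover : Metric.closedBall x₀ Rad ⊆ ⋃ k : ℕ, Metric.ball (e k) δ := by
      intro x _
      obtain ⟨k, hk⟩ := he.exists_dist_lt x hδ0
      exact Set.mem_iUnion.2 ⟨k, by rwa [Metric.mem_ball] ⟩
    obtain ⟨t, ht⟩ := (isCompact_closedBall x₀ Rad).elim_finite_subcover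
      (fun k : ℕ => Metric.ball (e k) δ) (fun k => Metric.isOpen_ball) hcover
    have hev : ∀ᶠ n in atTop, ∀ k ∈ t, ‖u (φ n) (e k) - f (e k)‖ ≤ ε / 3 := by
      rw [Filter.eventually_all_finset]
      intro k _
      obtain ⟨N, hN⟩ := Metric.tendsto_atTop.1 (hf (e k)) (ε/3) (by linarith)
      rw [Filter.eventually_atTop]
      refine ⟨N, fun n hn => ?_⟩
      rw [← dist_eq_norm]
      exact (hN n hn).le
    filter_upwards [hev] with n hn x hx
    obtain ⟨k, hkt, hxk⟩ := Set.mem_iUnion₂.1 (ht hx)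
    rw [Metric.mem_ball] at hxk
    rw [Metric.mem_closedBall] at hx
    have hpx : pfun x₀ lam x ^ γ ≤ b := by
      apply pfun_rpow_le_of_dist_le hlam.le hγ.le
      linarith
    have hpk : pfun x₀ lam (e k) ^ γ ≤ b := by
      apply pfun_rpow_le_of_dist_le hlam.le hγ.le
      have := dist_triangle (e k) x x₀
      rw [dist_comm (e k) x] at this
      linarith
    have hwd : wDelta x₀ lam γ x (e k) ≤ δ * (b * b) := by
      have := wDelta_le_bnd (x₀ := x₀) (γ := γ) hlam.le hb0.le hδ0.le hxk.le hpx hpk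
      linarith [this]
    have h2 : ‖u (φ n) x - u (φ n) (e k)‖ ≤ Cb * (δ * (b * b)) :=
      (hlip _ _ _).trans (mul_le_mul_of_nonneg_left hwd hCb)
    have h3 : ‖f (e k) - f x‖ ≤ Cb * (δ * (b * b)) := by
      have hlf : ∀ a c : M, ‖f a - f c‖ ≤ Cb * wDelta x₀ lam γ a c := by
        intro a c
        have ht2 : Tendsto (fun m => ‖u (φ m) a - u (φ m) c‖) atTop (𝓝 ‖f a - f c‖) :=
          ((hf a).sub (hf c)).norm
        exact le_of_tendsto ht2 (Eventually.of_forall fun m => hlip _ _ _)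
      refine (hlf _ _).trans ?_
      rw [wDelta_comm]
      exact mul_le_mul_of_nonneg_left hwd hCb
    have h5 : Cb * (δ * (b * b)) ≤ ε / 3 := by
      have hδ2 : δ ≤ ε / (6 * Cb * (b * b) + 1) := min_le_right _ _
      calc Cb * (δ * (b * b)) ≤ Cb * (ε / (6 * Cb * (b * b) + 1) * (b * b)) := by
            apply mul_le_mul_of_nonneg_left _ hCb
            exact mul_le_mul_of_nonneg_right hδ2 (mul_nonneg hb0.le hb0.le)
        _ = Cb * (b * b) * ε / (6 * Cb * (b * b) + 1) := by ring
        _ ≤ ε / 3 := by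
            rw [div_le_div_iff₀ h6 (by norm_num : (0:ℝ) < 3)]
            nlinarith [hε.le, mul_nonneg hCb (mul_nonneg hb0.le hb0.le)]
    have h1 : ‖u (φ n) x - f x‖ ≤
        ‖u (φ n) x - u (φ n) (e k)‖ + ‖u (φ n) (e k) - f (e k)‖ + ‖f (e k) - f x‖ := by
      have := norm_add₃_le (a := u (φ n) x - u (φ n) (e k))
        (b := u (φ n) (e k) - f (e k)) (c := f (e k) - f x)
      simpa using this
    calc ‖u (φ n) x - f x‖ ≤ Cb * (δ * (b * b)) + ε/3 + Cb * (δ * (b * b)) := by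
          have := hn k hkt
          linarith [h1, h2, h3, this]
      _ ≤ ε := by linarith

end extraction




section semigroupFacts

variable {M G : Type*} [MetricSpace M] {x₀ : M} {act : G → M → M} {c : G → ℝ}

lemma c_submul [Semigroup G]
    (hact : ∀ (g h : G) (x : M), act (g * h) x = act g (act h x))
    (hc0 : ∀ g : G, 0 ≤ c g)
    (hcLip : ∀ (g : G) (x y : M), dist (act g x) (act g y) ≤ c g * dist x y)
    (hcMin : ∀ (g : G) (K : ℝ), 0 ≤ K →
      (∀ x y : M, dist (act g x) (act g y) ≤ K * dist x y) → c g ≤ K)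
    (g h : G) : c (g * h) ≤ c g * c h := by
  apply hcMin _ _ (mul_nonneg (hc0 g) (hc0 h))
  intro x y
  rw [hact, hact]
  calc dist (act g (act h x)) (act g (act h y)) ≤ c g * dist (act h x) (act h y) :=
        hcLip g _ _
    _ ≤ c g * (c h * dist x y) := mul_le_mul_of_nonneg_left (hcLip h x y) (hc0 g)
    _ = c g * c h * dist x y := by ring

lemma deltaTilde_one_le (hc0 : ∀ g : G, 0 ≤ c g) (g : G) :
    1 ≤ deltaTilde x₀ act c g := by
  have := hc0 g
  have := dist_nonneg (x := act g x₀) (y := x₀)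
  unfold deltaTilde; linarith

lemma deltaTilde_submul [Semigroup G]
    (hact : ∀ (g h : G) (x : M), act (g * h) x = act g (act h x))
    (hc0 : ∀ g : G, 0 ≤ c g)
    (hcLip : ∀ (g : G) (x y : M), dist (act g x) (act g y) ≤ c g * dist x y)
    (hcMin : ∀ (g : G) (K : ℝ), 0 ≤ K →
      (∀ x y : M, dist (act g x) (act g y) ≤ K * dist x y) → c g ≤ K)
    (g h : G) : deltaTilde x₀ act c (g * h) ≤ deltaTilde x₀ act c g * deltaTilde x₀ act c h := by
  have hsub := c_submul hact hc0 hcLip hcMin g h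
  have hd : dist (act (g * h) x₀) x₀ ≤ c g * dist (act h x₀) x₀ + dist (act g x₀) x₀ := by
    rw [hact]
    calc dist (act g (act h x₀)) x₀
        ≤ dist (act g (act h x₀)) (act g x₀) + dist (act g x₀) x₀ := dist_triangle _ _ _
      _ ≤ c g * dist (act h x₀) x₀ + dist (act g x₀) x₀ := by
          have := hcLip g (act h x₀) x₀
          linarith
  have h1 := hc0 g; have h2 := hc0 h
  have h3 := dist_nonneg (x := act g x₀) (y := x₀)
  have h4 := dist_nonneg (x := act h x₀) (y := x₀)
  unfold deltaTilde
  nlinarith [mul_nonneg h1 h2, mul_nonneg h3 h4, mul_nonneg h1 h4, mul_nonneg h3 h2]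

variable [MeasurableSpace G]

lemma measurable_act_pt [MeasurableSpace M]
    (hactm : Measurable fun q : G × M => act q.1 q.2) :
    Measurable fun g : G => act g x₀ :=
  hactm.comp (measurable_id.prodMk measurable_const)

lemma measurable_dist_act [MeasurableSpace M] [BorelSpace M]
    (hactm : Measurable fun q : G × M => act q.1 q.2) :
    Measurable fun g : G => dist (act g x₀) x₀ :=
  (Continuous.measurable (continuous_id.dist continuous_const)).comp
    (measurable_act_pt (x₀ := x₀) hactm)

lemma measurable_deltaTilde [MeasurableSpace M] [BorelSpace M]
    (hactm : Measurable fun q : G × M => act q.1 q.2) (hcm : Measurable c) :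
    Measurable (deltaTilde x₀ act c) := by
  unfold deltaTilde
  exact ((measurable_const.add hcm).add (measurable_dist_act (x₀ := x₀) hactm))

lemma measurable_rpow_c {α : Type*} [MeasurableSpace α] {f : α → ℝ}
    (hf : Measurable f) (s : ℝ) : Measurable fun a => f a ^ s := by
  have h : Measurable fun x : ℝ => x ^ s := by measurability
  exact h.comp hf

end semigroupFacts

section piStarFacts

variable {G : Type*} [MeasurableSpace G] [Semigroup G] [MeasurableMul₂ G]
  {π : Measure G} [IsProbabilityMeasure π]

lemma piStar_prob (n : ℕ) : IsProbabilityMeasure (piStar π n) := by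
  induction n with
  | zero => simpa [piStar] using ‹IsProbabilityMeasure π›
  | succ n ih =>
    rw [piStar]
    have : IsProbabilityMeasure (π.prod (piStar π n)) := by
      haveI := ih; infer_instance
    exact Measure.isProbabilityMeasure_map measurable_mul.aemeasurable

lemma lintegral_piStar_succ (n : ℕ) {F : G → ℝ≥0∞} (hF : Measurable F) :
    ∫⁻ g, F g ∂(piStar π (n+1)) = ∫⁻ q : G × G, F (q.1 * q.2) ∂(π.prod (piStar π n)) := by
  rw [piStar, lintegral_map hF measurable_mul]

lemma piStar_moment_ne_top {δ : G → ℝ} (hδm : Measurable δ) (hδ1 : ∀ g, 1 ≤ δ g)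
    (hδsub : ∀ g h, δ (g * h) ≤ δ g * δ h) {s : ℝ} (hs : 0 ≤ s)
    (h1 : ∫⁻ g, ENNReal.ofReal (δ g ^ s) ∂π ≠ ⊤) (n : ℕ) :
    ∫⁻ g, ENNReal.ofReal (δ g ^ s) ∂(piStar π n) ≠ ⊤ := by
  have hδ0 : ∀ g, (0:ℝ) ≤ δ g := fun g => zero_le_one.trans (hδ1 g)
  have hmeas : Measurable fun g => ENNReal.ofReal (δ g ^ s) :=
    ENNReal.measurable_ofReal.comp
      (measurable_rpow_c hδm s)
  induction n with
  | zero => simpa [piStar] using h1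
  | succ n ih =>
    haveI := piStar_prob (π := π) n
    rw [lintegral_piStar_succ n hmeas]
    have hb : ∀ q : G × G, ENNReal.ofReal (δ (q.1 * q.2) ^ s) ≤
        ENNReal.ofReal (δ q.1 ^ s) * ENNReal.ofReal (δ q.2 ^ s) := by
      intro q
      rw [← ENNReal.ofReal_mul (Real.rpow_nonneg (hδ0 _) _)]
      apply ENNReal.ofReal_le_ofReal
      rw [← Real.mul_rpow (hδ0 _) (hδ0 _)]
      exact Real.rpow_le_rpow (hδ0 _) (hδsub _ _) hs
    have hmono := lintegral_mono (μ := π.prod (piStar π n)) hb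
    refine ne_top_of_le_ne_top ?_ hmono
    have hpm := lintegral_prod_mul (μ := π) (ν := piStar π n)
      (f := fun g => ENNReal.ofReal (δ g ^ s)) (g := fun g => ENNReal.ofReal (δ g ^ s))
      hmeas.aemeasurable hmeas.aemeasurable
    rw [hpm]
    exact ENNReal.mul_ne_top h1 ih

end piStarFacts

section invariance

variable {M G : Type*} [MetricSpace M] [MeasurableSpace M] [BorelSpace M]
  [MeasurableSpace G] [Semigroup G] [MeasurableMul₂ G]
  {act : G → M → M} {π : Measure G} [IsProbabilityMeasure π]
  {ν : Measure M} [IsProbabilityMeasure ν]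

lemma lint_invariant_base
    (hactm : Measurable fun q : G × M => act q.1 q.2)
    (hν : Measure.map (fun q : G × M => act q.1 q.2) (π.prod ν) = ν)
    {f : M → ℝ≥0∞} (hf : Measurable f) :
    ∫⁻ x, ∫⁻ g, f (act g x) ∂π ∂ν = ∫⁻ x, f x ∂ν := by
  have hfa : Measurable fun q : G × M => f (act q.1 q.2) := hf.comp hactm
  have hfs : Measurable fun p : M × G => f (act p.2 p.1) :=
    hf.comp (hactm.comp measurable_swap)
  conv_rhs => rw [← hν]
  rw [lintegral_map hf hactm, lintegral_prod _ hfa.aemeasurable]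
  exact lintegral_lintegral_swap (f := fun x g => f (act g x)) hfs.aemeasurable

lemma lint_invariant
    (hact : ∀ (g h : G) (x : M), act (g * h) x = act g (act h x))
    (hactm : Measurable fun q : G × M => act q.1 q.2)
    (hν : Measure.map (fun q : G × M => act q.1 q.2) (π.prod ν) = ν) :
    ∀ (n : ℕ) (f : M → ℝ≥0∞), Measurable f →
      ∫⁻ x, ∫⁻ g, f (act g x) ∂(piStar π n) ∂ν = ∫⁻ x, f x ∂ν := by
  intro n
  induction n with
  | zero =>
    intro f hf
    exact lint_invariant_base hactm hν hf
  | succ n ih =>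
    intro f hf
    haveI := piStar_prob (π := π) n
    set F : M → ℝ≥0∞ := fun y => ∫⁻ g, f (act g y) ∂π with hF
    have hFm : Measurable F := by
      apply Measurable.lintegral_prod_right' (f := fun p : M × G => f (act p.2 p.1))
      exact hf.comp (hactm.comp measurable_swap)
    have hstep : ∀ x : M, ∫⁻ g, f (act g x) ∂(piStar π (n+1))
        = ∫⁻ h, F (act h x) ∂(piStar π n) := by
      intro x
      have hfx : Measurable fun g : G => f (act g x) :=
        hf.comp (hactm.comp (measurable_id.prodMk measurable_const))
      rw [lintegral_piStar_succ n hfx]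
      have heq : ∀ q : G × G, f (act (q.1 * q.2) x) = f (act q.1 (act q.2 x)) := by
        intro q; rw [hact]
      simp_rw [heq]
      have hm2 : Measurable fun q : G × G => f (act q.1 (act q.2 x)) := by
        apply hf.comp
        exact hactm.comp (measurable_fst.prodMk
          (hactm.comp (measurable_snd.prodMk measurable_const)))
      rw [lintegral_prod _ hm2.aemeasurable]
      have hswap := lintegral_lintegral_swap (μ := π) (ν := piStar π n)
        (f := fun g h => f (act g (act h x))) hm2.aemeasurable
      rw [hswap]
    calc ∫⁻ x, ∫⁻ g, f (act g x) ∂(piStar π (n+1)) ∂ν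
        = ∫⁻ x, ∫⁻ h, F (act h x) ∂(piStar π n) ∂ν := by
          apply lintegral_congr; intro x; exact hstep x
      _ = ∫⁻ x, F x ∂ν := ih F hFm
      _ = ∫⁻ x, f x ∂ν := lint_invariant_base hactm hν hf

end invariance

section moment

lemma min_add_le_ennreal {a b N : ℝ≥0∞} : min (a + b) N ≤ min a N + b := by
  rcases le_total a N with h | h
  · calc min (a + b) N ≤ a + b := min_le_left _ _
      _ = min a N + b := by rw [min_eq_left h]
  · calc min (a + b) N ≤ N := min_le_right _ _
      _ ≤ min a N + b := le_add_of_le_of_nonneg (by rw [min_eq_right h]) zero_le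

lemma measurable_pfun {M : Type*} [MetricSpace M] [MeasurableSpace M] [BorelSpace M]
    (x₀ : M) (lam : ℝ) : Measurable (pfun x₀ lam) := by
  have h : Continuous (pfun x₀ lam) := by
    unfold pfun
    exact continuous_const.add (continuous_const.mul (continuous_id.dist continuous_const))
  exact h.measurable

set_option maxHeartbeats 1000000 in
lemma nu_moment {M G : Type*} [MetricSpace M] [MeasurableSpace M] [BorelSpace M]
    [MeasurableSpace G] [Semigroup G] [MeasurableMul₂ G]
    (x₀ : M) (act : G → M → M)
    (hact : ∀ (g h : G) (x : M), act (g * h) x = act g (act h x))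
    (hactm : Measurable fun q : G × M => act q.1 q.2)
    (c : G → ℝ) (hcm : Measurable c)
    (hc0 : ∀ g : G, 0 ≤ c g)
    (hcLip : ∀ (g : G) (x y : M), dist (act g x) (act g y) ≤ c g * dist x y)
    (hcMin : ∀ (g : G) (K : ℝ), 0 ≤ K →
      (∀ x y : M, dist (act g x) (act g y) ≤ K * dist x y) → c g ≤ K)
    (π : Measure G) [IsProbabilityMeasure π]
    (γ₀ : ℝ) (hγ₀ : 0 < γ₀) (n₀ : ℕ)
    (hM : ∫⁻ g, ENNReal.ofReal (deltaTilde x₀ act c g ^ (γ₀ + 1)) ∂π < ⊤)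
    (lam₀ : ℝ) (hlam₀ : 0 < lam₀) (hlam₀' : lam₀ ≤ 1)
    (hθ : ∫⁻ g, ENNReal.ofReal (c g * deltaFun x₀ act c lam₀ g ^ (2 * γ₀))
        ∂(piStar π n₀) < 1)
    (ν : Measure M) [IsProbabilityMeasure ν]
    (hν : Measure.map (fun q : G × M => act q.1 q.2) (π.prod ν) = ν) :
    ∫⁻ x, ENNReal.ofReal (pfun x₀ lam₀ x ^ (γ₀ + 1)) ∂ν < ⊤ := by
  haveI hμprob := piStar_prob (π := π) n₀
  set s : ℝ := γ₀ + 1 with hsdef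
  have hs0 : 0 < s := by simp [hsdef]; linarith
  have hs1 : 1 ≤ s := by simp [hsdef]; linarith
  set μ : Measure G := piStar π n₀ with hμdef
  set dT : G → ℝ := deltaTilde x₀ act c with hdT
  have hdT1 : ∀ g, 1 ≤ dT g := fun g => deltaTilde_one_le hc0 g
  have hdT0 : ∀ g, 0 ≤ dT g := fun g => zero_le_one.trans (hdT1 g)
  have hdTm : Measurable dT := measurable_deltaTilde hactm hcm
  -- the function e
  set e : G → ℝ := fun g => 1 + lam₀ * dist (act g x₀) x₀ with he
  have he1 : ∀ g, 1 ≤ e g := by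
    intro g
    have := mul_nonneg hlam₀.le (dist_nonneg (x := act g x₀) (y := x₀))
    simp only [he]; linarith
  have heδ : ∀ g, e g ≤ dT g := by
    intro g
    have h1 : lam₀ * dist (act g x₀) x₀ ≤ dist (act g x₀) x₀ :=
      mul_le_of_le_one_left dist_nonneg hlam₀'
    have := hc0 g
    simp only [he, hdT, deltaTilde]; linarith
  -- the pointwise comparison  c^s ≤ c ⬝ δ_λ^{2γ₀}
  have hc_s : ∀ g, c g ^ s ≤ c g * deltaFun x₀ act c lam₀ g ^ (2 * γ₀) := by
    intro g
    have hδf1 : 1 ≤ deltaFun x₀ act c lam₀ g := by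
      have h1 : (1:ℝ) ≤ max (c g) 1 := le_max_right _ _
      have h2 := mul_nonneg hlam₀.le (dist_nonneg (x := act g x₀) (y := x₀))
      simp only [deltaFun]; linarith
    have hδfc : c g ≤ deltaFun x₀ act c lam₀ g := by
      have h1 : c g ≤ max (c g) 1 := le_max_left _ _
      have h2 := mul_nonneg hlam₀.le (dist_nonneg (x := act g x₀) (y := x₀))
      simp only [deltaFun]; linarith
    rcases eq_or_lt_of_le (hc0 g) with hc | hc
    · rw [← hc, Real.zero_rpow hs0.ne', zero_mul]
    · have h1 : c g ^ s = c g ^ γ₀ * c g := by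
        rw [hsdef, Real.rpow_add hc, Real.rpow_one]
      have h2 : c g ^ γ₀ ≤ deltaFun x₀ act c lam₀ g ^ γ₀ :=
        Real.rpow_le_rpow (hc0 g) hδfc hγ₀.le
      have h3 : deltaFun x₀ act c lam₀ g ^ γ₀ ≤ deltaFun x₀ act c lam₀ g ^ (2 * γ₀) :=
        Real.rpow_le_rpow_of_exponent_le hδf1 (by linarith)
      calc c g ^ s = c g ^ γ₀ * c g := h1
        _ ≤ deltaFun x₀ act c lam₀ g ^ (2 * γ₀) * c g := by
            apply mul_le_mul_of_nonneg_right (h2.trans h3) (hc0 g)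
        _ = c g * deltaFun x₀ act c lam₀ g ^ (2 * γ₀) := mul_comm _ _
  -- the quantity q
  set q : ℝ≥0∞ := ∫⁻ g, ENNReal.ofReal (c g ^ s) ∂μ with hqdef
  have hq1 : q < 1 := by
    refine lt_of_le_of_lt ?_ hθ
    apply lintegral_mono
    intro g
    exact ENNReal.ofReal_le_ofReal (hc_s g)
  have hqt : q ≠ ⊤ := (hq1.trans_le le_top).ne
  set qr : ℝ := q.toReal with hqr
  have hqr0 : 0 ≤ qr := ENNReal.toReal_nonneg
  have hqr1 : qr < 1 := by
    have := (ENNReal.toReal_lt_toReal hqt (by simp)).2 hq1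
    simpa using this
  have hqofReal : q = ENNReal.ofReal qr := (ENNReal.ofReal_toReal hqt).symm
  -- choice of κ
  have hbase : 1 < 2 / (1 + qr) := by
    rw [lt_div_iff₀ (by linarith)]
    linarith
  set κ : ℝ := (2 / (1 + qr)) ^ s⁻¹ with hκdef
  have hκ1 : 1 < κ := by
    rw [hκdef]
    have := Real.one_lt_rpow_iff_of_pos (x := 2 / (1 + qr)) (y := s⁻¹) (by linarith)
    rw [this]
    left
    exact ⟨hbase, by positivity⟩
  have hκs : κ ^ s = 2 / (1 + qr) := by
    rw [hκdef, Real.rpow_inv_rpow (by linarith) hs0.ne']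
  have hκ0 : 0 < κ := by linarith
  set κ' : ℝ := κ / (κ - 1) with hκ'def
  have hκ'0 : 0 < κ' := div_pos hκ0 (by linarith)
  -- the splitting inequality
  have hsplit : ∀ a b : ℝ, 0 ≤ a → 0 ≤ b →
      (a + b) ^ s ≤ κ ^ s * a ^ s + κ' ^ s * b ^ s := by
    intro a b ha hb
    have hle : a + b ≤ κ * a ∨ a + b ≤ κ' * b := by
      rcases le_total b ((κ - 1) * a) with h | h
      · left; nlinarith
      · right
        rw [hκ'def, div_mul_eq_mul_div, le_div_iff₀ (by linarith)]
        nlinarith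
    have key : ∀ t u : ℝ, 0 ≤ u → a + b ≤ t * u →
        0 ≤ t → (a + b) ^ s ≤ t ^ s * u ^ s := by
      intro t u hu htu ht
      rw [← Real.mul_rpow ht hu]
      exact Real.rpow_le_rpow (by linarith) htu hs0.le
    rcases hle with h | h
    · have h1 := key κ a ha h hκ0.le
      have h2 : (0:ℝ) ≤ κ' ^ s * b ^ s :=
        mul_nonneg (Real.rpow_nonneg hκ'0.le _) (Real.rpow_nonneg hb _)
      linarith
    · have h1 := key κ' b hb h hκ'0.le
      have h2 : (0:ℝ) ≤ κ ^ s * a ^ s :=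
        mul_nonneg (Real.rpow_nonneg hκ0.le _) (Real.rpow_nonneg ha _)
      linarith
  -- pointwise drift inequality (real version)
  have hkey : ∀ (g : G) (x : M), pfun x₀ lam₀ (act g x) ^ s ≤
      κ ^ s * (c g ^ s * pfun x₀ lam₀ x ^ s) + κ' ^ s * dT g ^ s := by
    intro g x
    have hp0 : (0:ℝ) ≤ pfun x₀ lam₀ (act g x) := by
      have := mul_nonneg hlam₀.le (dist_nonneg (x := act g x) (y := x₀))
      simp only [pfun]; linarith
    have hpx0 : (0:ℝ) ≤ pfun x₀ lam₀ x := by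
      have := mul_nonneg hlam₀.le (dist_nonneg (x := x) (y := x₀))
      simp only [pfun]; linarith
    have h1 : pfun x₀ lam₀ (act g x) ≤ c g * pfun x₀ lam₀ x + e g := by
      have htri : dist (act g x) x₀ ≤ dist (act g x) (act g x₀) + dist (act g x₀) x₀ :=
        dist_triangle _ _ _
      have hlip := hcLip g x x₀
      have h2 : lam₀ * dist (act g x) (act g x₀) ≤ lam₀ * (c g * dist x x₀) :=
        mul_le_mul_of_nonneg_left hlip hlam₀.le
      have h3 := hc0 g
      simp only [pfun, he]
      nlinarith
    have h4 : pfun x₀ lam₀ (act g x) ^ s ≤ (c g * pfun x₀ lam₀ x + e g) ^ s :=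
      Real.rpow_le_rpow hp0 h1 hs0.le
    have h5 := hsplit (c g * pfun x₀ lam₀ x) (e g) (mul_nonneg (hc0 g) hpx0)
      (zero_le_one.trans (he1 g))
    have h6 : (c g * pfun x₀ lam₀ x) ^ s = c g ^ s * pfun x₀ lam₀ x ^ s :=
      Real.mul_rpow (hc0 g) hpx0
    have h7 : e g ^ s ≤ dT g ^ s :=
      Real.rpow_le_rpow (zero_le_one.trans (he1 g)) (heδ g) hs0.le
    have h8 : κ' ^ s * e g ^ s ≤ κ' ^ s * dT g ^ s :=
      mul_le_mul_of_nonneg_left h7 (Real.rpow_nonneg hκ'0.le _)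
    calc pfun x₀ lam₀ (act g x) ^ s ≤ (c g * pfun x₀ lam₀ x + e g) ^ s := h4
      _ ≤ κ ^ s * (c g * pfun x₀ lam₀ x) ^ s + κ' ^ s * e g ^ s := h5
      _ = κ ^ s * (c g ^ s * pfun x₀ lam₀ x ^ s) + κ' ^ s * e g ^ s := by rw [h6]
      _ ≤ κ ^ s * (c g ^ s * pfun x₀ lam₀ x ^ s) + κ' ^ s * dT g ^ s := by linarith
  -- pass to ℝ≥0∞
  set V : M → ℝ≥0∞ := fun x => ENNReal.ofReal (pfun x₀ lam₀ x ^ s) with hV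
  have hVm : Measurable V :=
    ENNReal.measurable_ofReal.comp (measurable_rpow_c (measurable_pfun x₀ lam₀) s)
  have hVfin : ∀ x, V x ≠ ⊤ := fun x => ENNReal.ofReal_ne_top
  set A : ℝ≥0∞ := ENNReal.ofReal (κ ^ s) * q with hA
  set B : ℝ≥0∞ := ENNReal.ofReal (κ' ^ s) * ∫⁻ g, ENNReal.ofReal (dT g ^ s) ∂μ with hB
  have hA1 : A < 1 := by
    rw [hA, hqofReal, ← ENNReal.ofReal_mul (Real.rpow_nonneg hκ0.le _)]
    rw [ENNReal.ofReal_lt_one]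
    rw [hκs]
    rw [div_mul_eq_mul_div, div_lt_one (by linarith)]
    linarith
  have hdTμ : ∫⁻ g, ENNReal.ofReal (dT g ^ s) ∂μ ≠ ⊤ := by
    apply piStar_moment_ne_top hdTm hdT1
      (fun g h => deltaTilde_submul hact hc0 hcLip hcMin g h) hs0.le
    exact hM.ne
  have hBt : B ≠ ⊤ := ENNReal.mul_ne_top ENNReal.ofReal_ne_top hdTμ
  have hcsm : Measurable fun g => ENNReal.ofReal (c g ^ s) :=
    ENNReal.measurable_ofReal.comp (measurable_rpow_c hcm s)
  have hdTsm : Measurable fun g => ENNReal.ofReal (dT g ^ s) :=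
    ENNReal.measurable_ofReal.comp (measurable_rpow_c hdTm s)
  -- drift inequality in ℝ≥0∞
  have hdrift : ∀ x, ∫⁻ g, V (act g x) ∂μ ≤ A * V x + B := by
    intro x
    have hb : ∀ g, V (act g x) ≤
        ENNReal.ofReal (κ ^ s) * (ENNReal.ofReal (c g ^ s) * V x)
          + ENNReal.ofReal (κ' ^ s) * ENNReal.ofReal (dT g ^ s) := by
      intro g
      have h0 := hkey g x
      calc V (act g x) ≤ ENNReal.ofReal (κ ^ s * (c g ^ s * pfun x₀ lam₀ x ^ s)
            + κ' ^ s * dT g ^ s) := ENNReal.ofReal_le_ofReal h0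
        _ ≤ ENNReal.ofReal (κ ^ s * (c g ^ s * pfun x₀ lam₀ x ^ s))
            + ENNReal.ofReal (κ' ^ s * dT g ^ s) := ENNReal.ofReal_add_le
        _ = ENNReal.ofReal (κ ^ s) * (ENNReal.ofReal (c g ^ s) * V x)
            + ENNReal.ofReal (κ' ^ s) * ENNReal.ofReal (dT g ^ s) := by
            rw [ENNReal.ofReal_mul (Real.rpow_nonneg hκ0.le _),
              ENNReal.ofReal_mul (Real.rpow_nonneg (hc0 g) _),
              ENNReal.ofReal_mul (Real.rpow_nonneg hκ'0.le _)]
    calc ∫⁻ g, V (act g x) ∂μ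
        ≤ ∫⁻ g, (ENNReal.ofReal (κ ^ s) * (ENNReal.ofReal (c g ^ s) * V x)
            + ENNReal.ofReal (κ' ^ s) * ENNReal.ofReal (dT g ^ s)) ∂μ :=
          lintegral_mono hb
      _ = (∫⁻ g, ENNReal.ofReal (κ ^ s) * (ENNReal.ofReal (c g ^ s) * V x) ∂μ)
          + ∫⁻ g, ENNReal.ofReal (κ' ^ s) * ENNReal.ofReal (dT g ^ s) ∂μ := by
          apply lintegral_add_right
          exact measurable_const.mul hdTsm
      _ = A * V x + B := by
          rw [hA, hB]
          congr 1
          · rw [lintegral_const_mul _ (f := fun g => ENNReal.ofReal (c g ^ s) * V x) (hcsm.mul_const _)]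
            rw [lintegral_mul_const _ hcsm]
            ring
          · rw [lintegral_const_mul _ hdTsm]
  clear_value A B
  -- iterates of the kernel
  set Q : (M → ℝ≥0∞) → M → ℝ≥0∞ := fun F x => ∫⁻ g, F (act g x) ∂μ with hQ
  have hQm : ∀ F : M → ℝ≥0∞, Measurable F → Measurable (Q F) := by
    intro F hF
    apply Measurable.lintegral_prod_right' (f := fun p : M × G => F (act p.2 p.1))
    exact hF.comp (hactm.comp measurable_swap)
  have hQmono : ∀ F₁ F₂ : M → ℝ≥0∞, (∀ y, F₁ y ≤ F₂ y) → ∀ x, Q F₁ x ≤ Q F₂ x := by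
    intro F₁ F₂ h x
    exact lintegral_mono fun g => h (act g x)
  have hQconst : ∀ (k : ℝ≥0∞) (x : M), Q (fun _ => k) x = k := by
    intro k x
    simp [hQ, lintegral_const]
  -- now the truncated argument
  have hmain : ∀ N : ℕ, ∫⁻ x, min (V x) (N : ℝ≥0∞) ∂ν ≤ B * (1 - A)⁻¹ := by
    intro N
    set W : M → ℝ≥0∞ := fun x => min (V x) (N : ℝ≥0∞) with hW
    have hWm : Measurable W := hVm.min measurable_const
    -- iterates
    set QW : ℕ → M → ℝ≥0∞ := fun n => (fun F => Q F)^[n] W with hQW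
    have hQWsucc : ∀ n, QW (n + 1) = Q (QW n) := by
      intro n
      show (fun F => Q F)^[n+1] W = Q ((fun F => Q F)^[n] W)
      rw [Function.iterate_succ_apply']
    have hQWm : ∀ n, Measurable (QW n) := by
      intro n
      induction n with
      | zero => simpa [hQW] using hWm
      | succ n ih => rw [hQWsucc]; exact hQm _ ih
    -- invariance
    have hinv : ∀ n, ∫⁻ x, QW n x ∂ν = ∫⁻ x, W x ∂ν := by
      intro n
      induction n with
      | zero => simp [hQW]
      | succ n ih =>
        rw [hQWsucc]
        have := lint_invariant hact hactm hν n₀ (QW n) (hQWm n)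
        calc ∫⁻ x, Q (QW n) x ∂ν = ∫⁻ x, QW n x ∂ν := this
          _ = ∫⁻ x, W x ∂ν := ih
    -- upper bound for the iterates
    have hgeom : ∀ n : ℕ, (Finset.range n).sum (fun k => A ^ k) ≤ (1 - A)⁻¹ := by
      intro n
      calc (Finset.range n).sum (fun k => A ^ k) ≤ ∑' k, A ^ k := ENNReal.sum_le_tsum _
        _ = (1 - A)⁻¹ := ENNReal.tsum_geometric A
    have hub : ∀ n x, QW n x ≤ min (A ^ n * V x + B * (Finset.range n).sum (fun k => A ^ k))
        ((N : ℝ≥0∞)) := by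
      intro n
      induction n with
      | zero =>
        intro x
        simp only [hQW, Function.iterate_zero, id_eq, pow_zero, one_mul, Finset.range_zero,
          Finset.sum_empty, mul_zero, add_zero]
        exact min_le_min le_rfl le_rfl
      | succ n ih =>
        intro x
        rw [hQWsucc]
        have h1 : Q (QW n) x ≤ Q (fun y => min (A ^ n * V y
            + B * (Finset.range n).sum (fun k => A ^ k)) ((N:ℝ≥0∞))) x :=
          hQmono (QW n) (fun y => min (A ^ n * V y
            + B * (Finset.range n).sum (fun k => A ^ k)) ((N:ℝ≥0∞))) ih x
        have h2 : Q (fun y => min (A ^ n * V y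
            + B * (Finset.range n).sum (fun k => A ^ k)) ((N:ℝ≥0∞))) x ≤
            min (Q (fun y => A ^ n * V y + B * (Finset.range n).sum (fun k => A ^ k)) x)
              ((N:ℝ≥0∞)) := by
          apply le_min
          · exact hQmono (fun y => min (A ^ n * V y
              + B * (Finset.range n).sum (fun k => A ^ k)) ((N:ℝ≥0∞)))
              (fun y => A ^ n * V y + B * (Finset.range n).sum (fun k => A ^ k))
              (fun y => min_le_left _ _) x
          · calc Q (fun y => min (A ^ n * V y + B * (Finset.range n).sum (fun k => A ^ k))
                ((N:ℝ≥0∞))) x ≤ Q (fun _ => (N:ℝ≥0∞)) x :=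
                  hQmono (fun y => min (A ^ n * V y
                    + B * (Finset.range n).sum (fun k => A ^ k)) ((N:ℝ≥0∞)))
                    (fun _ => (N:ℝ≥0∞)) (fun y => min_le_right _ _) x
              _ = (N:ℝ≥0∞) := hQconst _ x
        have h3 : Q (fun y => A ^ n * V y + B * (Finset.range n).sum (fun k => A ^ k)) x
            = A ^ n * (Q V x) + B * (Finset.range n).sum (fun k => A ^ k) := by
          simp only [hQ]
          rw [lintegral_add_right _ measurable_const, lintegral_const]
          simp only [measure_univ, mul_one]
          rw [lintegral_const_mul]
          exact hVm.comp (hactm.comp (measurable_id.prodMk measurable_const))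
        have h4 : A ^ n * (Q V x) + B * (Finset.range n).sum (fun k => A ^ k)
            ≤ A ^ (n+1) * V x + B * (Finset.range (n+1)).sum (fun k => A ^ k) := by
          have h5 := hdrift x
          calc A ^ n * (Q V x) + B * (Finset.range n).sum (fun k => A ^ k)
              ≤ A ^ n * (A * V x + B) + B * (Finset.range n).sum (fun k => A ^ k) := by
                apply add_le_add_left
                exact mul_le_mul_right h5 _
            _ = A ^ (n+1) * V x + B * (A ^ n + (Finset.range n).sum (fun k => A ^ k)) := by
                ring
            _ = A ^ (n+1) * V x + B * (Finset.range (n+1)).sum (fun k => A ^ k) := by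
                rw [Finset.sum_range_succ, add_comm ((Finset.range n).sum (fun k => A ^ k)) (A ^ n)]
        refine le_min ?_ ?_
        · exact h1.trans (h2.trans ((min_le_left _ _).trans (h3.le.trans h4)))
        · exact h1.trans (h2.trans (min_le_right _ _))
    -- conclude
    have hWle : ∀ n, ∫⁻ x, W x ∂ν ≤
        (∫⁻ x, min (A ^ n * V x) ((N:ℝ≥0∞)) ∂ν) + B * (1 - A)⁻¹ := by
      intro n
      rw [← hinv n]
      calc ∫⁻ x, QW n x ∂ν
          ≤ ∫⁻ x, (min (A ^ n * V x) ((N:ℝ≥0∞)) + B * (Finset.range n).sum (fun k => A ^ k)) ∂ν := by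
            refine lintegral_mono fun x => (hub n x).trans min_add_le_ennreal
        _ = (∫⁻ x, min (A ^ n * V x) ((N:ℝ≥0∞)) ∂ν) + B * (Finset.range n).sum (fun k => A ^ k) := by
            rw [lintegral_add_right _ measurable_const, lintegral_const]
            simp [measure_univ]
        _ ≤ (∫⁻ x, min (A ^ n * V x) ((N:ℝ≥0∞)) ∂ν) + B * (1 - A)⁻¹ := by
            exact add_le_add_right (mul_le_mul_right (hgeom n) B) _
    have hlim : Tendsto (fun n => ∫⁻ x, min (A ^ n * V x) ((N:ℝ≥0∞)) ∂ν) atTop (𝓝 0) := by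
      have h0 : Tendsto (fun n : ℕ => A ^ n) atTop (𝓝 0) :=
        ENNReal.tendsto_pow_atTop_nhds_zero_of_lt_one hA1
      have hptw : ∀ x : M, Tendsto (fun n => min (A ^ n * V x) ((N:ℝ≥0∞))) atTop (𝓝 0) := by
        intro x
        have h1 : Tendsto (fun n : ℕ => A ^ n * V x) atTop (𝓝 0) := by
          have := ENNReal.Tendsto.mul_const h0 (Or.inr (hVfin x))
          simpa using this
        have h2 : ∀ n : ℕ, min (A ^ n * V x) ((N:ℝ≥0∞)) ≤ A ^ n * V x :=
          fun n => min_le_left _ _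
        exact tendsto_of_tendsto_of_tendsto_of_le_of_le tendsto_const_nhds h1
          (fun n => zero_le) h2
      have := tendsto_lintegral_of_dominated_convergence (μ := ν)
        (F := fun n x => min (A ^ n * V x) ((N:ℝ≥0∞))) (f := fun _ => 0)
        (bound := fun _ => (N:ℝ≥0∞))
        (fun n => (hVm.const_mul _).min measurable_const)
        (fun n => Filter.Eventually.of_forall fun x => min_le_right _ _)
        (by simp [lintegral_const, measure_univ])
        (Filter.Eventually.of_forall hptw)
      simpa using this
    have : Tendsto (fun n => (∫⁻ x, min (A ^ n * V x) ((N:ℝ≥0∞)) ∂ν) + B * (1 - A)⁻¹)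
        atTop (𝓝 (0 + B * (1 - A)⁻¹)) := hlim.add tendsto_const_nhds
    rw [zero_add] at this
    exact ge_of_tendsto this (Filter.Eventually.of_forall hWle)
  -- take the supremum over N
  have hsup : ∫⁻ x, V x ∂ν = ⨆ N : ℕ, ∫⁻ x, min (V x) ((N:ℝ≥0∞)) ∂ν := by
    rw [← lintegral_iSup]
    · apply lintegral_congr
      intro x
      apply le_antisymm
      · obtain ⟨N, hN⟩ := exists_nat_ge (pfun x₀ lam₀ x ^ s)
        apply le_iSup_of_le N
        rw [min_eq_left]
        exact (ENNReal.ofReal_le_ofReal hN).trans (by simp)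
      · exact iSup_le fun N => min_le_left _ _
    · exact fun N => hVm.min measurable_const
    · intro i j hij x
      exact min_le_min le_rfl (by exact_mod_cast Nat.cast_le.2 hij)
  have hBfin : B * (1 - A)⁻¹ < ⊤ := by
    apply ENNReal.mul_lt_top hBt.lt_top
    rw [ENNReal.inv_lt_top]
    exact tsub_pos_of_lt hA1
  calc ∫⁻ x, V x ∂ν
      = ⨆ N : ℕ, ∫⁻ x, min (V x) ((N:ℝ≥0∞)) ∂ν := hsup
    _ ≤ B * (1 - A)⁻¹ := iSup_le hmain
    _ < ⊤ := hBfin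

end moment


end Stmt5Aux


open Stmt5Aux in
set_option maxHeartbeats 2000000 in
/-- Lemma 5.4: compactness of the canonical embeddings
`(𝓑_γ, N_{∞,γ,γ̃}) ↪ (𝓑_γ, |·|_{γ̃})` and `(𝓑_γ, N_{1,γ}) ↪ (𝓑_γ, ν(|·|))`. -/
theorem stmt5
    {M : Type*} [MetricSpace M] [ProperSpace M] [MeasurableSpace M] [BorelSpace M]
    {G : Type*} [Semigroup G] [MeasurableSpace G] [MeasurableMul₂ G]
    (x₀ : M) (act : G → M → M)
    (hact : ∀ (g h : G) (x : M), act (g * h) x = act g (act h x))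
    (hactm : Measurable fun q : G × M => act q.1 q.2)
    (c : G → ℝ) (hcm : Measurable c)
    (hc0 : ∀ g : G, 0 ≤ c g)
    (hcLip : ∀ (g : G) (x y : M), dist (act g x) (act g y) ≤ c g * dist x y)
    (hcMin : ∀ (g : G) (K : ℝ), 0 ≤ K →
      (∀ x y : M, dist (act g x) (act g y) ≤ K * dist x y) → c g ≤ K)
    (π : Measure G) [IsProbabilityMeasure π]
    -- condition 𝓗(γ₀)
    (γ₀ : ℝ) (hγ₀ : 0 < γ₀) (n₀ : ℕ)
    (hM : ∫⁻ g, ENNReal.ofReal (deltaTilde x₀ act c g ^ (γ₀ + 1)) ∂π < ⊤)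
    (hM' : ∫⁻ g, ENNReal.ofReal (c g * deltaTilde x₀ act c g ^ (2 * γ₀)) ∂π < ⊤)
    (hC : ∫⁻ g, ENNReal.ofReal (c g * max (c g) 1 ^ (2 * γ₀)) ∂(piStar π n₀) < 1)
    -- `λ₀ ∈ (0,1]`
    (lam₀ : ℝ) (hlam₀ : 0 < lam₀) (hlam₀' : lam₀ ≤ 1)
    (hθ : ∫⁻ g, ENNReal.ofReal (c g * deltaFun x₀ act c lam₀ g ^ (2 * γ₀))
        ∂(piStar π n₀) < 1)
    -- the `P`-invariant probability measure
    (ν : Measure M) [IsProbabilityMeasure ν]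
    (hν : Measure.map (fun q : G × M => act q.1 q.2) (π.prod ν) = ν) :
    -- (i)
    (∀ γ γt : ℝ, 0 < γ → γ < γt →
      ∀ u : ℕ → M → ℂ, (∀ n, memB x₀ lam₀ γ (u n)) →
      (∃ Cb : ℝ, ∀ n, mGam x₀ lam₀ γ (u n) + nrmGam x₀ lam₀ γt (u n) ≤ Cb) →
      ∃ f : M → ℂ, memB x₀ lam₀ γ f ∧ ∃ φ : ℕ → ℕ, StrictMono φ ∧
        Tendsto (fun n => nrmGam x₀ lam₀ γt (u (φ n) - f)) atTop (𝓝 0)) ∧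
    -- (ii)
    (∀ γ : ℝ, 0 < γ → γ ≤ γ₀ →
      ∀ u : ℕ → M → ℂ, (∀ n, memB x₀ lam₀ γ (u n)) →
      (∃ Cb : ℝ, ∀ n, mGam x₀ lam₀ γ (u n) + ∫ x, ‖u n x‖ ∂ν ≤ Cb) →
      ∃ f : M → ℂ, memB x₀ lam₀ γ f ∧ ∃ φ : ℕ → ℕ, StrictMono φ ∧
        Tendsto (fun n => ∫ x, ‖u (φ n) x - f x‖ ∂ν) atTop (𝓝 0)) := by

  -- `M` is nonempty since it carries a probability measure
  haveI hMne : Nonempty M := by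
    by_contra h
    rw [not_nonempty_iff] at h
    have h1 : ν Set.univ = 1 := measure_univ
    have h2 : (Set.univ : Set M) = ∅ := Set.univ_eq_empty_iff.2 h
    rw [h2, measure_empty] at h1
    exact zero_ne_one h1
  constructor
  · -- part (i)
    intro γ γt hγ hγγt u hmem hbdd
    obtain ⟨Cb, hb⟩ := hbdd
    have hγ0 : (0:ℝ) ≤ γ := hγ.le
    have hγtle : γ ≤ γt := hγγt.le
    have hm0 : ∀ n, 0 ≤ mGam x₀ lam₀ γ (u n) := fun n => mGam_nonneg (hmem n) hlam₀.le
    have hn0 : ∀ n, 0 ≤ nrmGam x₀ lam₀ γt (u n) := fun n =>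
      nrmGam_nonneg (hmem n) hlam₀ hγ0 hγtle x₀
    have hCb0 : 0 ≤ Cb := le_trans (add_nonneg (hm0 0) (hn0 0)) (hb 0)
    have hmle : ∀ n, mGam x₀ lam₀ γ (u n) ≤ Cb := by
      intro n; have h1 := hb n; have h2 := hn0 n; linarith
    have hnle : ∀ n, nrmGam x₀ lam₀ γt (u n) ≤ Cb := by
      intro n; have h1 := hb n; have h2 := hm0 n; linarith
    have hlip : ∀ n x y, ‖u n x - u n y‖ ≤ Cb * wDelta x₀ lam₀ γ x y := by
      intro n x y
      refine (norm_sub_le_mGam_mul (hmem n) hlam₀.le x y).trans ?_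
      exact mul_le_mul_of_nonneg_right (hmle n) (wDelta_nonneg hlam₀.le x y)
    have hpt : ∀ x : M, ∃ R : ℝ, ∀ n, ‖u n x‖ ≤ R := by
      intro x
      refine ⟨Cb * pfun x₀ lam₀ x ^ (γt + 1), fun n => ?_⟩
      refine (norm_le_nrmGam_mul (hmem n) hlam₀ hγ0 hγtle x).trans ?_
      exact mul_le_mul_of_nonneg_right (hnle n)
        (pfun_rpow_pos (x₀ := x₀) hlam₀.le x).le
    obtain ⟨f, hflip, φ, hφ, hfpt, hfunif⟩ := extraction x₀ hlam₀ hγ u hCb0 hlip hpt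
    refine ⟨f, ⟨Cb, hflip⟩, φ, hφ, ?_⟩
    rw [Metric.tendsto_atTop]
    intro ε hε
    -- choice of the radius
    set β : ℝ := γt - γ with hβ
    have hβ0 : 0 < β := by rw [hβ]; linarith
    set T : ℝ := 6 * Cb * lam₀⁻¹ / ε + 1 with hT
    have hT1 : 1 ≤ T := by
      have h1 : 0 ≤ 6 * Cb * lam₀⁻¹ / ε := by positivity
      rw [hT]; linarith
    set KK : ℝ := T ^ β⁻¹ with hKK
    have hKK0 : 0 ≤ KK := Real.rpow_nonneg (by linarith) _
    have hKKβ : KK ^ β = T := Real.rpow_inv_rpow (by linarith) hβ0.ne'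
    obtain ⟨RN, hRN⟩ := exists_nat_ge (KK / lam₀)
    set Rad : ℝ := (RN : ℝ) with hRad
    have hRad0 : (0:ℝ) ≤ Rad := Nat.cast_nonneg _
    have hKRad : KK ≤ 1 + lam₀ * Rad := by
      have h1 : KK ≤ lam₀ * Rad := by
        rw [hRad]; exact (div_le_iff₀' hlam₀).1 hRN
      linarith
    have hev1 := hfunif Rad (ε/6) (by linarith)
    have hev2 := hfunif 0 (ε/6) (by linarith)
    rw [Filter.eventually_atTop] at hev1 hev2
    obtain ⟨N1, hN1⟩ := hev1
    obtain ⟨N2, hN2⟩ := hev2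
    refine ⟨max N1 N2, fun n hn => ?_⟩
    have hn1 := hN1 n (le_trans (le_max_left _ _) hn)
    have hn2 := hN2 n (le_trans (le_max_right _ _) hn)
    have hx₀mem : x₀ ∈ Metric.closedBall x₀ 0 := by simp
    have hAn : ‖u (φ n) x₀ - f x₀‖ ≤ ε/6 := hn2 x₀ hx₀mem
    have hdlip : ∀ x y : M, ‖(u (φ n) x - f x) - (u (φ n) y - f y)‖
        ≤ (2 * Cb) * wDelta x₀ lam₀ γ x y := by
      intro x y
      have h1 := hlip (φ n) x y
      have h2 := hflip x y
      calc ‖(u (φ n) x - f x) - (u (φ n) y - f y)‖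
          = ‖(u (φ n) x - u (φ n) y) - (f x - f y)‖ := by
            rw [show (u (φ n) x - f x) - (u (φ n) y - f y)
              = (u (φ n) x - u (φ n) y) - (f x - f y) by ring]
        _ ≤ ‖u (φ n) x - u (φ n) y‖ + ‖f x - f y‖ := norm_sub_le _ _
        _ ≤ (2 * Cb) * wDelta x₀ lam₀ γ x y := by linarith
    have hdiffB : memB x₀ lam₀ γ (u (φ n) - f) := by
      refine ⟨2 * Cb, fun x y => ?_⟩
      simpa [Pi.sub_apply] using hdlip x y
    have hptw : ∀ x : M, ‖(u (φ n) - f) x‖ ≤ (ε/2) * pfun x₀ lam₀ x ^ (γt + 1) := by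
      intro x
      have hp1 : (1:ℝ) ≤ pfun x₀ lam₀ x ^ (γt + 1) :=
        one_le_pfun_rpow hlam₀.le (by linarith) x
      by_cases hx : dist x x₀ ≤ Rad
      · have h1 := hn1 x (Metric.mem_closedBall.2 hx)
        simp only [Pi.sub_apply]
        nlinarith
      · push_neg at hx
        have hpbig : KK ≤ pfun x₀ lam₀ x := by
          have h1 : 1 + lam₀ * Rad ≤ pfun x₀ lam₀ x := by
            simp only [pfun]
            have := mul_le_mul_of_nonneg_left hx.le hlam₀.le
            linarith
          linarith
        have hppos := pfun_pos (x₀ := x₀) hlam₀.le x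
        have h2 : ‖(u (φ n) x - f x)‖ ≤ ε/6 + 2 * Cb * wDelta x₀ lam₀ γ x x₀ := by
          have h3 := hdlip x x₀
          have h4 : ‖(u (φ n) x - f x)‖ ≤
              ‖(u (φ n) x - f x) - (u (φ n) x₀ - f x₀)‖ + ‖u (φ n) x₀ - f x₀‖ := by
            simpa using norm_add_le ((u (φ n) x - f x) - (u (φ n) x₀ - f x₀))
              (u (φ n) x₀ - f x₀)
          linarith
        have h5 : wDelta x₀ lam₀ γ x x₀ ≤ lam₀⁻¹ * pfun x₀ lam₀ x ^ (γ + 1) :=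
          wDelta_base_le hlam₀ hγ0 x
        have h6 : pfun x₀ lam₀ x ^ (γ + 1) ≤ T⁻¹ * pfun x₀ lam₀ x ^ (γt + 1) := by
          have h8 : T ≤ pfun x₀ lam₀ x ^ β := by
            rw [← hKKβ]
            exact Real.rpow_le_rpow hKK0 hpbig hβ0.le
          have h9 : pfun x₀ lam₀ x ^ (γ + 1) * pfun x₀ lam₀ x ^ β
              = pfun x₀ lam₀ x ^ (γt + 1) := by
            rw [← Real.rpow_add hppos]
            congr 1
            rw [hβ]; ring
          have h7 : pfun x₀ lam₀ x ^ (γ + 1) * T ≤ pfun x₀ lam₀ x ^ (γt + 1) := by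
            calc pfun x₀ lam₀ x ^ (γ + 1) * T
                ≤ pfun x₀ lam₀ x ^ (γ + 1) * pfun x₀ lam₀ x ^ β :=
                  mul_le_mul_of_nonneg_left h8 (Real.rpow_nonneg hppos.le _)
              _ = pfun x₀ lam₀ x ^ (γt + 1) := h9
          rw [le_inv_mul_iff₀ (by linarith : (0:ℝ) < T)]
          calc T * pfun x₀ lam₀ x ^ (γ + 1) = pfun x₀ lam₀ x ^ (γ + 1) * T := mul_comm _ _
            _ ≤ pfun x₀ lam₀ x ^ (γt + 1) := h7
        have h10 : 2 * Cb * lam₀⁻¹ * T⁻¹ ≤ ε / 3 := by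
          have hT0 : (0:ℝ) < T := by linarith
          have hkeyT : ε / 3 * T = 2 * Cb * lam₀⁻¹ + ε / 3 := by
            rw [hT]; field_simp; ring
          rw [← div_eq_mul_inv, div_le_iff₀ hT0, hkeyT]
          linarith
        have h11 : 2 * Cb * wDelta x₀ lam₀ γ x x₀ ≤ (ε/3) * pfun x₀ lam₀ x ^ (γt + 1) := by
          have h12 : 2 * Cb * wDelta x₀ lam₀ γ x x₀
              ≤ 2 * Cb * (lam₀⁻¹ * pfun x₀ lam₀ x ^ (γ + 1)) :=
            mul_le_mul_of_nonneg_left h5 (by linarith)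
          have h13 : 2 * Cb * (lam₀⁻¹ * pfun x₀ lam₀ x ^ (γ + 1))
              = (2 * Cb * lam₀⁻¹) * pfun x₀ lam₀ x ^ (γ + 1) := by ring
          have h14 : (2 * Cb * lam₀⁻¹) * pfun x₀ lam₀ x ^ (γ + 1)
              ≤ (2 * Cb * lam₀⁻¹) * (T⁻¹ * pfun x₀ lam₀ x ^ (γt + 1)) := by
            apply mul_le_mul_of_nonneg_left h6
            positivity
          have h15 : (2 * Cb * lam₀⁻¹) * (T⁻¹ * pfun x₀ lam₀ x ^ (γt + 1))
              = (2 * Cb * lam₀⁻¹ * T⁻¹) * pfun x₀ lam₀ x ^ (γt + 1) := by ring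
          have h16 : (2 * Cb * lam₀⁻¹ * T⁻¹) * pfun x₀ lam₀ x ^ (γt + 1)
              ≤ (ε/3) * pfun x₀ lam₀ x ^ (γt + 1) :=
            mul_le_mul_of_nonneg_right h10 (by linarith)
          linarith
        have h17 : ε/6 ≤ ε/6 * pfun x₀ lam₀ x ^ (γt + 1) :=
          le_mul_of_one_le_right (by linarith) hp1
        simp only [Pi.sub_apply]
        linarith
    have hnrm : nrmGam x₀ lam₀ γt (u (φ n) - f) ≤ ε/2 :=
      nrmGam_le (by linarith) hlam₀.le hptw
    have hnn : 0 ≤ nrmGam x₀ lam₀ γt (u (φ n) - f) :=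
      nrmGam_nonneg hdiffB hlam₀ hγ0 hγtle x₀
    rw [Real.dist_eq, sub_zero, abs_of_nonneg hnn]
    linarith
  · -- part (ii)
    intro γ hγ hγγ₀ u hmem hbdd
    obtain ⟨Cb, hb⟩ := hbdd
    have hγ0 : (0:ℝ) ≤ γ := hγ.le
    have hmoment := nu_moment x₀ act hact hactm c hcm hc0 hcLip hcMin π γ₀ hγ₀ n₀ hM
      lam₀ hlam₀ hlam₀' hθ ν hν
    have hpcont : Continuous (pfun x₀ lam₀) := by
      unfold pfun
      exact continuous_const.add (continuous_const.mul (continuous_id.dist continuous_const))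
    have hPcont : Continuous (fun x => pfun x₀ lam₀ x ^ (γ + 1)) :=
      hpcont.rpow_const fun x => Or.inl (pfun_pos (x₀ := x₀) hlam₀.le x).ne'
    have hPnn : ∀ x : M, 0 ≤ pfun x₀ lam₀ x ^ (γ + 1) :=
      fun x => (pfun_rpow_pos (x₀ := x₀) hlam₀.le x).le
    have hPle : ∀ x : M, pfun x₀ lam₀ x ^ (γ + 1) ≤ pfun x₀ lam₀ x ^ (γ₀ + 1) :=
      fun x => pfun_rpow_mono hlam₀.le x (by linarith)
    have hPint : Integrable (fun x => pfun x₀ lam₀ x ^ (γ + 1)) ν := by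
      refine ⟨hPcont.aestronglyMeasurable, ?_⟩
      rw [hasFiniteIntegral_iff_ofReal (Filter.Eventually.of_forall hPnn)]
      refine lt_of_le_of_lt ?_ hmoment
      exact lintegral_mono fun x => ENNReal.ofReal_le_ofReal (hPle x)
    have hwcont : Continuous (fun x : M => wDelta x₀ lam₀ γ x x₀) := by
      unfold wDelta
      exact ((continuous_id.dist continuous_const).mul
        (hpcont.rpow_const fun x => Or.inr hγ0)).mul continuous_const
    have hwnn : ∀ x : M, 0 ≤ wDelta x₀ lam₀ γ x x₀ := fun x => wDelta_nonneg hlam₀.le x x₀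
    have hwle : ∀ x : M, wDelta x₀ lam₀ γ x x₀ ≤ lam₀⁻¹ * pfun x₀ lam₀ x ^ (γ + 1) :=
      fun x => wDelta_base_le hlam₀ hγ0 x
    have hwint : Integrable (fun x : M => wDelta x₀ lam₀ γ x x₀) ν := by
      apply Integrable.mono' (hPint.const_mul lam₀⁻¹) hwcont.aestronglyMeasurable
      refine Filter.Eventually.of_forall fun x => ?_
      rw [Real.norm_eq_abs, abs_of_nonneg (hwnn x)]
      exact hwle x
    set Iw : ℝ := ∫ x, wDelta x₀ lam₀ γ x x₀ ∂ν with hIwdef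
    have hIw0 : 0 ≤ Iw := integral_nonneg hwnn
    have hm0 : ∀ n, 0 ≤ mGam x₀ lam₀ γ (u n) := fun n => mGam_nonneg (hmem n) hlam₀.le
    have hi0 : ∀ n, 0 ≤ ∫ x, ‖u n x‖ ∂ν := fun n => integral_nonneg fun x => norm_nonneg _
    have hCb0 : 0 ≤ Cb := le_trans (add_nonneg (hm0 0) (hi0 0)) (hb 0)
    have hmle : ∀ n, mGam x₀ lam₀ γ (u n) ≤ Cb := by
      intro n; have h1 := hb n; have h2 := hi0 n; linarith
    have hile : ∀ n, ∫ x, ‖u n x‖ ∂ν ≤ Cb := by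
      intro n; have h1 := hb n; have h2 := hm0 n; linarith
    have hlip : ∀ n x y, ‖u n x - u n y‖ ≤ Cb * wDelta x₀ lam₀ γ x y := by
      intro n x y
      refine (norm_sub_le_mGam_mul (hmem n) hlam₀.le x y).trans ?_
      exact mul_le_mul_of_nonneg_right (hmle n) (wDelta_nonneg hlam₀.le x y)
    have hucont : ∀ n, Continuous (u n) := fun n => continuous_of_memB hlam₀.le hγ0 (hmem n)
    have hubnd : ∀ n x, ‖u n x‖ ≤ ‖u n x₀‖ + Cb * wDelta x₀ lam₀ γ x x₀ := by
      intro n x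
      have h1 : ‖u n x‖ ≤ ‖u n x - u n x₀‖ + ‖u n x₀‖ := by
        simpa using norm_add_le (u n x - u n x₀) (u n x₀)
      have h2 := hlip n x x₀
      linarith
    have huint : ∀ n, Integrable (fun x => ‖u n x‖) ν := by
      intro n
      apply Integrable.mono' ((integrable_const ‖u n x₀‖).add (hwint.const_mul Cb))
        ((hucont n).norm.aestronglyMeasurable)
      refine Filter.Eventually.of_forall fun x => ?_
      rw [norm_norm]
      exact hubnd n x
    have hux₀ : ∀ n, ‖u n x₀‖ ≤ Cb + Cb * Iw := by
      intro n
      have h1 : ∀ x : M, ‖u n x₀‖ ≤ ‖u n x‖ + Cb * wDelta x₀ lam₀ γ x x₀ := by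
        intro x
        have h2 : ‖u n x₀‖ ≤ ‖u n x₀ - u n x‖ + ‖u n x‖ := by
          simpa using norm_add_le (u n x₀ - u n x) (u n x)
        have h3 := hlip n x₀ x
        rw [wDelta_comm] at h3
        linarith
      have h4 : ‖u n x₀‖ = ∫ _x, ‖u n x₀‖ ∂ν := by
        rw [integral_const]
        simp [measure_univ]
      rw [h4]
      calc ∫ _x, ‖u n x₀‖ ∂ν ≤ ∫ x, (‖u n x‖ + Cb * wDelta x₀ lam₀ γ x x₀) ∂ν :=
            integral_mono (integrable_const _) ((huint n).add (hwint.const_mul Cb)) h1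
        _ = (∫ x, ‖u n x‖ ∂ν) + Cb * Iw := by
            rw [integral_add (huint n) (hwint.const_mul Cb), integral_const_mul]
        _ ≤ Cb + Cb * Iw := by have := hile n; linarith
    set D₀ : ℝ := Cb + Cb * Iw with hD₀def
    have hD₀0 : 0 ≤ D₀ := add_nonneg hCb0 (mul_nonneg hCb0 hIw0)
    have hpt : ∀ x : M, ∃ R : ℝ, ∀ n, ‖u n x‖ ≤ R := by
      intro x
      refine ⟨D₀ + Cb * wDelta x₀ lam₀ γ x x₀, fun n => (hubnd n x).trans ?_⟩
      have := hux₀ n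
      linarith
    obtain ⟨f, hflip, φ, hφ, hfpt, hfunif⟩ := extraction x₀ hlam₀ hγ u hCb0 hlip hpt
    refine ⟨f, ⟨Cb, hflip⟩, φ, hφ, ?_⟩
    have hfcont : Continuous f := continuous_of_lip hlam₀.le hγ0 hflip
    have hfx₀ : ‖f x₀‖ ≤ D₀ :=
      le_of_tendsto (hfpt x₀).norm (Filter.Eventually.of_forall fun n => hux₀ (φ n))
    have hgb : ∀ n x, ‖u (φ n) x - f x‖ ≤ 2 * D₀ + 2 * Cb * wDelta x₀ lam₀ γ x x₀ := by
      intro n x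
      have h1 : ‖u (φ n) x - f x‖ ≤ ‖u (φ n) x - u (φ n) x₀‖ + ‖u (φ n) x₀ - f x₀‖
          + ‖f x₀ - f x‖ := by
        have := norm_add₃_le (a := u (φ n) x - u (φ n) x₀) (b := u (φ n) x₀ - f x₀)
          (c := f x₀ - f x)
        simpa using this
      have h2 := hlip (φ n) x x₀
      have h3 := hflip x₀ x
      rw [wDelta_comm] at h3
      have h4 : ‖u (φ n) x₀ - f x₀‖ ≤ 2 * D₀ := by
        have h5 := norm_sub_le (u (φ n) x₀) (f x₀)
        have h6 := hux₀ (φ n)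
        linarith
      linarith
    have hdcont : ∀ n, Continuous fun x => ‖u (φ n) x - f x‖ :=
      fun n => ((hucont (φ n)).sub hfcont).norm
    set bnd : M → ℝ := fun x => 2 * D₀ + 2 * Cb * wDelta x₀ lam₀ γ x x₀ with hbnddef
    have hbnn : ∀ x, 0 ≤ bnd x := by
      intro x
      have h1 := hwnn x
      have h2 : 0 ≤ 2 * Cb * wDelta x₀ lam₀ γ x x₀ := by positivity
      simp only [hbnddef]
      linarith
    have hbint : Integrable bnd ν := (integrable_const _).add (hwint.const_mul _)
    have hdint : ∀ n, Integrable (fun x => ‖u (φ n) x - f x‖) ν := by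
      intro n
      apply Integrable.mono' hbint (hdcont n).aestronglyMeasurable
      exact Filter.Eventually.of_forall fun x => by rw [norm_norm]; exact hgb n x
    rw [Metric.tendsto_atTop]
    intro ε hε
    have hSmeas : ∀ R : ℕ, MeasurableSet {y : M | (R:ℝ) < dist y x₀} := by
      intro R
      have h1 : IsOpen {y : M | (R:ℝ) < dist y x₀} :=
        isOpen_lt continuous_const (continuous_id.dist continuous_const)
      exact h1.measurableSet
    have htail : Tendsto
        (fun R : ℕ => ∫ x, Set.indicator {y : M | (R:ℝ) < dist y x₀} bnd x ∂ν)
        atTop (𝓝 0) := by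
      have h0 := tendsto_integral_of_dominated_convergence (μ := ν)
        (F := fun (R : ℕ) x => Set.indicator {y : M | (R:ℝ) < dist y x₀} bnd x)
        (f := fun _ => (0:ℝ)) (bound := bnd)
        (fun R => hbint.aestronglyMeasurable.indicator (hSmeas R))
        hbint
        (fun R => Filter.Eventually.of_forall fun x => by
          refine (norm_indicator_le_norm_self bnd x).trans ?_
          rw [Real.norm_eq_abs, abs_of_nonneg (hbnn x)])
        (Filter.Eventually.of_forall fun x => by
          obtain ⟨N, hN⟩ := exists_nat_ge (dist x x₀)
          have heq : (fun _ : ℕ => (0:ℝ)) =ᶠ[atTop]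
              fun R : ℕ => Set.indicator {y : M | (R:ℝ) < dist y x₀} bnd x := by
            filter_upwards [Filter.eventually_ge_atTop N] with R hR
            have hnotmem : x ∉ {y : M | (R:ℝ) < dist y x₀} := by
              intro hmem2
              have h3 : (R:ℝ) < dist x x₀ := hmem2
              have hRN : (N:ℝ) ≤ (R:ℝ) := by exact_mod_cast hR
              linarith
            exact (Set.indicator_of_notMem hnotmem bnd).symm
          exact Filter.Tendsto.congr' heq tendsto_const_nhds)
      simpa using h0
    obtain ⟨R₀, hR₀⟩ := Metric.tendsto_atTop.1 htail (ε/4) (by linarith)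
    have htR : ∫ x, Set.indicator {y : M | (R₀:ℝ) < dist y x₀} bnd x ∂ν < ε/4 := by
      have h1 := hR₀ R₀ le_rfl
      rw [Real.dist_eq, sub_zero] at h1
      have h2 : 0 ≤ ∫ x, Set.indicator {y : M | (R₀:ℝ) < dist y x₀} bnd x ∂ν :=
        integral_nonneg fun x => Set.indicator_nonneg (fun y _ => hbnn y) x
      rwa [abs_of_nonneg h2] at h1
    have hev := hfunif (R₀ : ℝ) (ε/4) (by linarith)
    rw [Filter.eventually_atTop] at hev
    obtain ⟨N1, hN1⟩ := hev
    refine ⟨N1, fun n hn => ?_⟩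
    have hball := hN1 n hn
    have hptw : ∀ x : M, ‖u (φ n) x - f x‖
        ≤ ε/4 + Set.indicator {y : M | (R₀:ℝ) < dist y x₀} bnd x := by
      intro x
      by_cases hx : dist x x₀ ≤ (R₀:ℝ)
      · have h1 := hball x (Metric.mem_closedBall.2 hx)
        have h2 : 0 ≤ Set.indicator {y : M | (R₀:ℝ) < dist y x₀} bnd x :=
          Set.indicator_nonneg (fun y _ => hbnn y) x
        linarith
      · push_neg at hx
        have hxmem : x ∈ {y : M | (R₀:ℝ) < dist y x₀} := hx
        rw [Set.indicator_of_mem hxmem]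
        have h1 := hgb n x
        simp only [hbnddef]
        linarith
    have hindint : Integrable (fun x => Set.indicator {y : M | (R₀:ℝ) < dist y x₀} bnd x) ν :=
      hbint.indicator (hSmeas R₀)
    have hrint : Integrable
        (fun x => ε/4 + Set.indicator {y : M | (R₀:ℝ) < dist y x₀} bnd x) ν :=
      (integrable_const _).add hindint
    have hfin : ∫ x, ‖u (φ n) x - f x‖ ∂ν
        ≤ ε/4 + ∫ x, Set.indicator {y : M | (R₀:ℝ) < dist y x₀} bnd x ∂ν := by
      calc ∫ x, ‖u (φ n) x - f x‖ ∂ν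
          ≤ ∫ x, (ε/4 + Set.indicator {y : M | (R₀:ℝ) < dist y x₀} bnd x) ∂ν :=
            integral_mono (hdint n) hrint hptw
        _ = ε/4 + ∫ x, Set.indicator {y : M | (R₀:ℝ) < dist y x₀} bnd x ∂ν := by
            rw [integral_add (integrable_const _) hindint, integral_const]
            simp [measure_univ]
    have hnn : 0 ≤ ∫ x, ‖u (φ n) x - f x‖ ∂ν := integral_nonneg fun x => norm_nonneg _
    rw [Real.dist_eq, sub_zero, abs_of_nonneg hnn]
    linarith

end
end

section
/- Let k ∈ ℕ*, let q : G^k × M → ℂ be measurable, and suppose there are α, β ≥ 0 and nonnegative measurable A, B on G^k × M such that for all h ∈ G^k and all x, y ∈ M with d(x₀,y) ≤ d(x₀,x): |q(h,x)| ≤ A(h,x) p(x)^α and |q(h,x) − q(h,y)| ≤ B(h,x) d(x,y) p(x)^β. Let 0 < η′ ≤ η and assume 𝓘_k^{η′}(A_x, A_x + B_x) < +∞ for every x ∈ M (where A_x(h) = A(h,x), B_x(h) = B(h,x)). Then for every f ∈ 𝓑_{η′} and x ∈ M, 𝓚f(x) = ∫_{G^k} q(h,x) f(h* x) dπ^{⊗k}(h)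 is well defined, and for all x ≠ y with d(y,x₀) ≤ d(x,x₀): |𝓚f(x)|/p(x)^{η+1} ≤ (𝓘_k^{η′}(0,A_x)/p(x)^{η−η′−α}) |f|_{η′}, and |𝓚f(x) − 𝓚f(y)|/Δ_η(x,y) ≤ (𝓘_k^{η′}(A_x,0)/p(x)^{η−η′−α}) m_{η′}(f) + (𝓘_k^{η′}(0,B_x)/p(x)^{η−β−1}) |f|_{η′}. -/
open MeasureTheory ProbabilityTheory Filter Topology
open scoped ENNReal NNReal

noncomputable section

section Aux

variable {M : Type*} [MetricSpace M] {G : Type*}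

lemma one_le_pfun (x₀ : M) {lam : ℝ} (hlam : 0 ≤ lam) (x : M) : 1 ≤ pfun x₀ lam x := by
  have : 0 ≤ lam * dist x x₀ := mul_nonneg hlam dist_nonneg
  unfold pfun; linarith

lemma pfun_pos (x₀ : M) {lam : ℝ} (hlam : 0 ≤ lam) (x : M) : 0 < pfun x₀ lam x :=
  lt_of_lt_of_le one_pos (one_le_pfun x₀ hlam x)

lemma one_le_deltaFun (x₀ : M) (act : G → M → M) (c : G → ℝ) {lam : ℝ} (hlam : 0 ≤ lam)
    (g : G) : 1 ≤ deltaFun x₀ act c lam g := by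
  have h1 : (1 : ℝ) ≤ max (c g) 1 := le_max_right _ _
  have h2 : 0 ≤ lam * dist (act g x₀) x₀ := mul_nonneg hlam dist_nonneg
  unfold deltaFun; linarith

lemma pfun_act_le (x₀ : M) (act : G → M → M) (c : G → ℝ) {lam : ℝ} (hlam : 0 ≤ lam)
    (g : G) (x : M) (hlip : dist (act g x) (act g x₀) ≤ c g * dist x x₀) :
    pfun x₀ lam (act g x) ≤ deltaFun x₀ act c lam g * pfun x₀ lam x := by
  unfold pfun deltaFun
  have h1 : dist (act g x) x₀ ≤ c g * dist x x₀ + dist (act g x₀) x₀ :=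
    (dist_triangle (act g x) (act g x₀) x₀).trans (by linarith)
  have h2 : c g ≤ max (c g) 1 := le_max_left _ _
  have h3 : (1 : ℝ) ≤ max (c g) 1 := le_max_right _ _
  have h4 : (0 : ℝ) ≤ dist x x₀ := dist_nonneg
  have h5 : (0 : ℝ) ≤ dist (act g x₀) x₀ := dist_nonneg
  have h6 : 0 ≤ lam * dist x x₀ := mul_nonneg hlam h4
  have h7 : 0 ≤ lam * dist (act g x₀) x₀ := mul_nonneg hlam h5
  nlinarith [mul_le_mul_of_nonneg_left h2 h6, mul_nonneg h7 h6,
    mul_le_mul_of_nonneg_right h3 h7]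

lemma measurable_hstar {G : Type*} [Semigroup G] [MeasurableSpace G] [MeasurableMul₂ G] :
    ∀ k : ℕ, Measurable fun h : Fin (k + 1) → G => hstar h
  | 0 => measurable_pi_apply 0
  | (n + 1) => by
    have e : (fun h : Fin (n + 2) → G => hstar h)
        = fun h => h 0 * hstar (Fin.tail h) := rfl
    rw [e]
    exact (measurable_pi_apply 0).mul ((measurable_hstar n).comp
      (measurable_pi_lambda _ fun i => measurable_pi_apply i.succ))

end Aux

/-- Lemma 6.4. Here `k + 1 ≥ 1` plays the role of the paper's `k ∈ ℕ*`,
`hstar h = h₁ ⋯ h_{k+1}`, and `Measure.pi (fun _ => π)` is `π^{⊗(k+1)}`. -/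
theorem stmt10
    {M : Type*} [MetricSpace M] [ProperSpace M] [MeasurableSpace M] [BorelSpace M]
    {G : Type*} [Semigroup G] [MeasurableSpace G] [MeasurableMul₂ G]
    (x₀ : M) (act : G → M → M)
    (hact : ∀ (g h : G) (x : M), act (g * h) x = act g (act h x))
    (hactm : Measurable fun p : G × M => act p.1 p.2)
    (c : G → ℝ) (hcm : Measurable c)
    (hc0 : ∀ g : G, 0 ≤ c g)
    (hcLip : ∀ (g : G) (x y : M), dist (act g x) (act g y) ≤ c g * dist x y)
    (hcMin : ∀ (g : G) (K : ℝ), 0 ≤ K →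
      (∀ x y : M, dist (act g x) (act g y) ≤ K * dist x y) → c g ≤ K)
    (π : Measure G) [IsProbabilityMeasure π]
    (lam₀ : ℝ) (hlam₀ : 0 < lam₀) (hlam₀' : lam₀ ≤ 1)
    (k : ℕ)
    (q : (Fin (k + 1) → G) → M → ℂ)
    (hqm : Measurable fun z : (Fin (k + 1) → G) × M => q z.1 z.2)
    (A B : (Fin (k + 1) → G) → M → ℝ)
    (hAm : Measurable fun z : (Fin (k + 1) → G) × M => A z.1 z.2)
    (hBm : Measurable fun z : (Fin (k + 1) → G) × M => B z.1 z.2)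
    (hA0 : ∀ h x, 0 ≤ A h x) (hB0 : ∀ h x, 0 ≤ B h x)
    (α β : ℝ) (hα : 0 ≤ α) (hβ : 0 ≤ β)
    -- inequality (A)
    (hqA : ∀ (h : Fin (k + 1) → G) (x : M), ‖q h x‖ ≤ A h x * pfun x₀ lam₀ x ^ α)
    -- inequality (B)
    (hqB : ∀ (h : Fin (k + 1) → G) (x y : M), dist x₀ y ≤ dist x₀ x →
      ‖q h x - q h y‖ ≤ B h x * dist x y * pfun x₀ lam₀ x ^ β)
    (η' η : ℝ) (hη' : 0 < η') (hη'η : η' ≤ η)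
    -- `𝓘_k^{η'}(A_x, A_x + B_x) < ∞` for every `x`
    (hfin : ∀ x : M,
      (∫⁻ h, ENNReal.ofReal (A h x *
          (c (hstar h) * deltaFun x₀ act c lam₀ (hstar h) ^ (2 * η')))
        ∂(Measure.pi fun _ : Fin (k + 1) => π) < ⊤) ∧
      (∫⁻ h, ENNReal.ofReal ((A h x + B h x) *
          deltaFun x₀ act c lam₀ (hstar h) ^ (η' + 1))
        ∂(Measure.pi fun _ : Fin (k + 1) => π) < ⊤)) :
    ∀ f : M → ℂ, memB x₀ lam₀ η' f →
      -- `𝓚f(x)` is well defined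
      (∀ x : M, Integrable (fun h : Fin (k + 1) → G => q h x * f (act (hstar h) x))
        (Measure.pi fun _ : Fin (k + 1) => π)) ∧
      ∀ x y : M, x ≠ y → dist y x₀ ≤ dist x x₀ →
        ‖∫ h, q h x * f (act (hstar h) x) ∂(Measure.pi fun _ : Fin (k + 1) => π)‖
            / pfun x₀ lam₀ x ^ (η + 1)
          ≤ (∫ h, A h x * deltaFun x₀ act c lam₀ (hstar h) ^ (η' + 1)
                ∂(Measure.pi fun _ : Fin (k + 1) => π))
              / pfun x₀ lam₀ x ^ (η - η' - α) * nrmGam x₀ lam₀ η' f ∧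
        ‖(∫ h, q h x * f (act (hstar h) x) ∂(Measure.pi fun _ : Fin (k + 1) => π))
            - ∫ h, q h y * f (act (hstar h) y) ∂(Measure.pi fun _ : Fin (k + 1) => π)‖
            / wDelta x₀ lam₀ η x y
          ≤ (∫ h, A h x * (c (hstar h) * deltaFun x₀ act c lam₀ (hstar h) ^ (2 * η'))
                ∂(Measure.pi fun _ : Fin (k + 1) => π))
              / pfun x₀ lam₀ x ^ (η - η' - α) * mGam x₀ lam₀ η' f
            + (∫ h, B h x * deltaFun x₀ act c lam₀ (hstar h) ^ (η' + 1)
                ∂(Measure.pi fun _ : Fin (k + 1) => π))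
              / pfun x₀ lam₀ x ^ (η - β - 1) * nrmGam x₀ lam₀ η' f := by
  intro f hf
  set μ := (Measure.pi fun _ : Fin (k + 1) => π) with hμdef
  have hlam0 : (0:ℝ) ≤ lam₀ := hlam₀.le
  have hp1 : ∀ z : M, 1 ≤ pfun x₀ lam₀ z := one_le_pfun x₀ hlam0
  have hp0 : ∀ z : M, 0 < pfun x₀ lam₀ z := pfun_pos x₀ hlam0
  have hδ1 : ∀ g : G, 1 ≤ deltaFun x₀ act c lam₀ g := one_le_deltaFun x₀ act c hlam0
  have hδ0 : ∀ g : G, 0 < deltaFun x₀ act c lam₀ g := fun g =>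
    lt_of_lt_of_le one_pos (hδ1 g)
  have hpact : ∀ (g : G) (z : M),
      pfun x₀ lam₀ (act g z) ≤ deltaFun x₀ act c lam₀ g * pfun x₀ lam₀ z :=
    fun g z => pfun_act_le x₀ act c hlam0 g z (hcLip g z x₀)
  obtain ⟨K₀, hK₀⟩ := hf
  set K := max K₀ 0 with hKdef
  have hK0 : (0:ℝ) ≤ K := le_max_right _ _
  have hwD : ∀ (γ : ℝ) (u v : M), 0 ≤ wDelta x₀ lam₀ γ u v := fun γ u v =>
    mul_nonneg (mul_nonneg dist_nonneg (Real.rpow_nonneg (hp0 u).le _))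
      (Real.rpow_nonneg (hp0 v).le _)
  have hwDpos : ∀ (γ : ℝ) (u v : M), u ≠ v → 0 < wDelta x₀ lam₀ γ u v := fun γ u v huv =>
    mul_pos (mul_pos (dist_pos.2 huv) (Real.rpow_pos_of_pos (hp0 u) _))
      (Real.rpow_pos_of_pos (hp0 v) _)
  have hK : ∀ u v : M, ‖f u - f v‖ ≤ K * wDelta x₀ lam₀ η' u v := fun u v =>
    (hK₀ u v).trans (mul_le_mul_of_nonneg_right (le_max_left _ _) (hwD _ _ _))
  -- continuity of `f`
  have hfc : Continuous f := by
    rw [continuous_iff_continuousAt]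
    intro z
    have hc1 : Continuous fun w : M =>
        K * (dist w z * pfun x₀ lam₀ w ^ η' * pfun x₀ lam₀ z ^ η') := by
      refine continuous_const.mul (Continuous.mul (Continuous.mul
        (continuous_id.dist continuous_const) ?_) continuous_const)
      refine Continuous.rpow_const ?_ (fun w => Or.inl (hp0 w).ne')
      exact continuous_const.add (continuous_const.mul
        (continuous_id.dist continuous_const))
    have hb : Tendsto (fun w : M =>
        K * (dist w z * pfun x₀ lam₀ w ^ η' * pfun x₀ lam₀ z ^ η')) (𝓝 z) (𝓝 0) := by
      have := hc1.tendsto z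
      simpa [dist_self] using this
    have h0 : Tendsto (fun w => f w - f z) (𝓝 z) (𝓝 0) :=
      squeeze_zero_norm (fun w => hK w z) hb
    have h1 := h0.add (tendsto_const_nhds (x := f z))
    have h2 : Tendsto f (𝓝 z) (𝓝 (f z)) := by simpa using h1
    exact h2
  have hpx₀ : pfun x₀ lam₀ x₀ = 1 := by simp [pfun]
  -- bounds through `nrmGam`
  have hNbdd : BddAbove {ρ : ℝ | ∃ z : M, ρ = ‖f z‖ / pfun x₀ lam₀ z ^ (η' + 1)} := by
    refine ⟨‖f x₀‖ + K / lam₀, ?_⟩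
    rintro ρ ⟨z, rfl⟩
    have hPpos := hp0 z
    have hPe : (0:ℝ) < pfun x₀ lam₀ z ^ (η' + 1) := Real.rpow_pos_of_pos hPpos _
    have hPe1 : (1:ℝ) ≤ pfun x₀ lam₀ z ^ (η' + 1) := by
      have h := Real.rpow_le_rpow_of_exponent_le (hp1 z) (by linarith : (0:ℝ) ≤ η' + 1)
      rwa [Real.rpow_zero] at h
    have h2 : wDelta x₀ lam₀ η' z x₀ = dist z x₀ * pfun x₀ lam₀ z ^ η' := by
      unfold wDelta
      rw [hpx₀, Real.one_rpow, mul_one]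
    have h3 : dist z x₀ ≤ pfun x₀ lam₀ z / lam₀ := by
      rw [le_div_iff₀ hlam₀]
      unfold pfun
      nlinarith [dist_nonneg (x := z) (y := x₀)]
    have h4 : K * wDelta x₀ lam₀ η' z x₀ ≤ K / lam₀ * pfun x₀ lam₀ z ^ (η' + 1) := by
      rw [h2]
      have h5 : dist z x₀ * pfun x₀ lam₀ z ^ η'
          ≤ (pfun x₀ lam₀ z / lam₀) * pfun x₀ lam₀ z ^ η' :=
        mul_le_mul_of_nonneg_right h3 (Real.rpow_nonneg hPpos.le _)
      calc K * (dist z x₀ * pfun x₀ lam₀ z ^ η')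
          ≤ K * ((pfun x₀ lam₀ z / lam₀) * pfun x₀ lam₀ z ^ η') :=
            mul_le_mul_of_nonneg_left h5 hK0
        _ = K / lam₀ * (pfun x₀ lam₀ z ^ (1:ℝ) * pfun x₀ lam₀ z ^ η') := by
            rw [Real.rpow_one]; ring
        _ = K / lam₀ * pfun x₀ lam₀ z ^ (η' + 1) := by
            rw [← Real.rpow_add hPpos, add_comm 1 η']
    have h6 : ‖f z‖ ≤ ‖f x₀‖ + K / lam₀ * pfun x₀ lam₀ z ^ (η' + 1) := by
      have h7 := hK z x₀
      have h8 := norm_sub_norm_le (f z) (f x₀)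
      linarith
    rw [div_le_iff₀ hPe]
    have h9 : ‖f x₀‖ ≤ ‖f x₀‖ * pfun x₀ lam₀ z ^ (η' + 1) :=
      le_mul_of_one_le_right (norm_nonneg _) hPe1
    nlinarith
  set N := nrmGam x₀ lam₀ η' f with hNdef
  have hN0 : (0:ℝ) ≤ N := by
    rw [hNdef]
    unfold nrmGam
    refine Real.sSup_nonneg ?_
    rintro ρ ⟨z, rfl⟩
    exact div_nonneg (norm_nonneg _) (Real.rpow_nonneg (hp0 z).le _)
  have hN : ∀ z : M, ‖f z‖ ≤ N * pfun x₀ lam₀ z ^ (η' + 1) := by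
    intro z
    have h1 : ‖f z‖ / pfun x₀ lam₀ z ^ (η' + 1) ≤ N := by
      rw [hNdef]
      exact le_csSup hNbdd ⟨z, rfl⟩
    rwa [div_le_iff₀ (Real.rpow_pos_of_pos (hp0 z) _)] at h1
  -- bounds through `mGam`
  set m := mGam x₀ lam₀ η' f with hmdef
  have hmbdd : BddAbove {ρ : ℝ | ∃ u v : M, u ≠ v ∧
      ρ = ‖f u - f v‖ / wDelta x₀ lam₀ η' u v} := by
    refine ⟨K, ?_⟩
    rintro ρ ⟨u, v, huv, rfl⟩
    rw [div_le_iff₀ (hwDpos η' u v huv)]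
    exact hK u v
  have hm0 : (0:ℝ) ≤ m := by
    rw [hmdef]
    unfold mGam
    refine Real.sSup_nonneg ?_
    rintro ρ ⟨u, v, huv, rfl⟩
    exact div_nonneg (norm_nonneg _) (hwD _ _ _)
  have hm : ∀ u v : M, ‖f u - f v‖ ≤ m * wDelta x₀ lam₀ η' u v := by
    intro u v
    by_cases huv : u = v
    · subst huv
      simp [wDelta, dist_self]
    · have h1 : ‖f u - f v‖ / wDelta x₀ lam₀ η' u v ≤ m := by
        rw [hmdef]
        exact le_csSup hmbdd ⟨u, v, huv, rfl⟩
      rwa [div_le_iff₀ (hwDpos η' u v huv)] at h1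
  -- measurability
  have hstarm : Measurable fun h : Fin (k + 1) → G => hstar h := measurable_hstar k
  have hδm : Measurable (deltaFun x₀ act c lam₀) := by
    unfold deltaFun
    exact (hcm.max measurable_const).add (measurable_const.mul
      ((hactm.comp (measurable_id.prodMk measurable_const)).dist measurable_const))
  have hδsm : Measurable fun h : Fin (k + 1) → G => deltaFun x₀ act c lam₀ (hstar h) :=
    hδm.comp hstarm
  have hcsm : Measurable fun h : Fin (k + 1) → G => c (hstar h) := hcm.comp hstarm
  have hAxm : ∀ z : M, Measurable fun h : Fin (k + 1) → G => A h z := fun z =>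
    hAm.comp (measurable_id.prodMk measurable_const)
  have hBxm : ∀ z : M, Measurable fun h : Fin (k + 1) → G => B h z := fun z =>
    hBm.comp (measurable_id.prodMk measurable_const)
  have hqxm : ∀ z : M, Measurable fun h : Fin (k + 1) → G => q h z := fun z =>
    hqm.comp (measurable_id.prodMk measurable_const)
  have hδnn : ∀ h : Fin (k + 1) → G,
      (0:ℝ) ≤ deltaFun x₀ act c lam₀ (hstar h) ^ (η' + 1) :=
    fun h => Real.rpow_nonneg (hδ0 _).le _
  -- integrability of the three comparison functions
  have intA : ∀ z : M, Integrable
      (fun h : Fin (k + 1) → G =>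
        A h z * deltaFun x₀ act c lam₀ (hstar h) ^ (η' + 1)) μ := by
    intro z
    have hmeas : Measurable fun h : Fin (k + 1) → G =>
        A h z * deltaFun x₀ act c lam₀ (hstar h) ^ (η' + 1) :=
      (hAxm z).mul (hδsm.pow measurable_const)
    refine ⟨hmeas.aestronglyMeasurable, ?_⟩
    rw [hasFiniteIntegral_iff_ofReal (Eventually.of_forall fun h =>
      mul_nonneg (hA0 h z) (hδnn h))]
    refine lt_of_le_of_lt (lintegral_mono fun h => ENNReal.ofReal_le_ofReal ?_) (hfin z).2
    exact mul_le_mul_of_nonneg_right (le_add_of_nonneg_right (hB0 h z)) (hδnn h)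
  have intB : ∀ z : M, Integrable
      (fun h : Fin (k + 1) → G =>
        B h z * deltaFun x₀ act c lam₀ (hstar h) ^ (η' + 1)) μ := by
    intro z
    have hmeas : Measurable fun h : Fin (k + 1) → G =>
        B h z * deltaFun x₀ act c lam₀ (hstar h) ^ (η' + 1) :=
      (hBxm z).mul (hδsm.pow measurable_const)
    refine ⟨hmeas.aestronglyMeasurable, ?_⟩
    rw [hasFiniteIntegral_iff_ofReal (Eventually.of_forall fun h =>
      mul_nonneg (hB0 h z) (hδnn h))]
    refine lt_of_le_of_lt (lintegral_mono fun h => ENNReal.ofReal_le_ofReal ?_) (hfin z).2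
    exact mul_le_mul_of_nonneg_right (le_add_of_nonneg_left (hA0 h z)) (hδnn h)
  have intAc : ∀ z : M, Integrable
      (fun h : Fin (k + 1) → G =>
        A h z * (c (hstar h) * deltaFun x₀ act c lam₀ (hstar h) ^ (2 * η'))) μ := by
    intro z
    have hmeas : Measurable fun h : Fin (k + 1) → G =>
        A h z * (c (hstar h) * deltaFun x₀ act c lam₀ (hstar h) ^ (2 * η')) :=
      (hAxm z).mul (hcsm.mul (hδsm.pow measurable_const))
    refine ⟨hmeas.aestronglyMeasurable, ?_⟩
    rw [hasFiniteIntegral_iff_ofReal (Eventually.of_forall fun h =>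
      mul_nonneg (hA0 h z) (mul_nonneg (hc0 _) (Real.rpow_nonneg (hδ0 _).le _)))]
    exact (hfin z).1
  -- pointwise bound for the kernel integrand
  have hdom : ∀ (z : M) (h : Fin (k + 1) → G),
      ‖q h z * f (act (hstar h) z)‖ ≤ (N * pfun x₀ lam₀ z ^ (α + η' + 1)) *
        (A h z * deltaFun x₀ act c lam₀ (hstar h) ^ (η' + 1)) := by
    intro z h
    have hPpos := hp0 z
    have hδpos := hδ0 (hstar h)
    rw [norm_mul]
    have h1 : ‖f (act (hstar h) z)‖ ≤
        N * (deltaFun x₀ act c lam₀ (hstar h) * pfun x₀ lam₀ z) ^ (η' + 1) := by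
      refine (hN _).trans (mul_le_mul_of_nonneg_left ?_ hN0)
      exact Real.rpow_le_rpow (hp0 _).le (hpact _ _) (by linarith)
    have h2 : ‖q h z‖ * ‖f (act (hstar h) z)‖ ≤ (A h z * pfun x₀ lam₀ z ^ α) *
        (N * (deltaFun x₀ act c lam₀ (hstar h) * pfun x₀ lam₀ z) ^ (η' + 1)) :=
      mul_le_mul (hqA h z) h1 (norm_nonneg _)
        (mul_nonneg (hA0 h z) (Real.rpow_nonneg hPpos.le _))
    refine h2.trans (le_of_eq ?_)
    have hPsplit : pfun x₀ lam₀ z ^ (α + η' + 1)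
        = pfun x₀ lam₀ z ^ α * pfun x₀ lam₀ z ^ (η' + 1) := by
      rw [show α + η' + 1 = α + (η' + 1) by ring]
      exact Real.rpow_add hPpos α (η' + 1)
    rw [Real.mul_rpow hδpos.le hPpos.le, hPsplit]
    ring
  have hint : ∀ z : M,
      Integrable (fun h : Fin (k + 1) → G => q h z * f (act (hstar h) z)) μ := by
    intro z
    refine ((intA z).const_mul (N * pfun x₀ lam₀ z ^ (α + η' + 1))).mono' ?_
      (Eventually.of_forall (hdom z))
    exact ((hqxm z).mul
      (hfc.measurable.comp (hactm.comp (hstarm.prodMk measurable_const)))).aestronglyMeasurable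
  refine ⟨hint, ?_⟩
  intro x y hxy hdyx
  have hPpos := hp0 x
  have hQpos := hp0 y
  have hP1 := hp1 x
  have hQ1 := hp1 y
  have hQP : pfun x₀ lam₀ y ≤ pfun x₀ lam₀ x := by
    unfold pfun
    have h := mul_le_mul_of_nonneg_left hdyx hlam0
    linarith
  constructor
  · -- the bound (2)
    have hIA0 : 0 ≤ ∫ h, A h x * deltaFun x₀ act c lam₀ (hstar h) ^ (η' + 1) ∂μ :=
      integral_nonneg fun h => mul_nonneg (hA0 h x) (hδnn h)
    have key : ‖∫ h, q h x * f (act (hstar h) x) ∂μ‖ ≤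
        (N * pfun x₀ lam₀ x ^ (α + η' + 1)) *
          ∫ h, A h x * deltaFun x₀ act c lam₀ (hstar h) ^ (η' + 1) ∂μ := by
      refine (norm_integral_le_integral_norm _).trans ?_
      rw [← integral_const_mul]
      exact integral_mono_of_nonneg (Eventually.of_forall fun h => norm_nonneg _)
        ((intA x).const_mul _) (Eventually.of_forall (hdom x))
    have hPe : (0:ℝ) < pfun x₀ lam₀ x ^ (η + 1) := Real.rpow_pos_of_pos hPpos _
    have e1 : pfun x₀ lam₀ x ^ (-(η - η' - α)) * pfun x₀ lam₀ x ^ (η + 1)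
        = pfun x₀ lam₀ x ^ (α + η' + 1) := by
      rw [← Real.rpow_add hPpos]
      congr 1
      ring
    rw [div_le_iff₀ hPe]
    refine key.trans (le_of_eq ?_)
    rw [div_eq_mul_inv, ← Real.rpow_neg hPpos.le, ← e1]
    ring
  · -- the bound (3)
    set I1 := ∫ h, A h x * (c (hstar h) *
      deltaFun x₀ act c lam₀ (hstar h) ^ (2 * η')) ∂μ with hI1def
    set I2 := ∫ h, B h x * deltaFun x₀ act c lam₀ (hstar h) ^ (η' + 1) ∂μ with hI2def
    have hI10 : 0 ≤ I1 := by
      rw [hI1def]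
      exact integral_nonneg fun h => mul_nonneg (hA0 h x)
        (mul_nonneg (hc0 _) (Real.rpow_nonneg (hδ0 _).le _))
    have hI20 : 0 ≤ I2 := by
      rw [hI2def]
      exact integral_nonneg fun h => mul_nonneg (hB0 h x) (hδnn h)
    have hD : 0 < dist x y := dist_pos.2 hxy
    -- pointwise estimate of the difference
    have hpt : ∀ h : Fin (k + 1) → G,
        ‖q h x * f (act (hstar h) x) - q h y * f (act (hstar h) y)‖ ≤
          (m * dist x y * pfun x₀ lam₀ x ^ (α + η') * pfun x₀ lam₀ y ^ η') *
            (A h x * (c (hstar h) * deltaFun x₀ act c lam₀ (hstar h) ^ (2 * η')))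
          + (N * dist x y * pfun x₀ lam₀ x ^ β * pfun x₀ lam₀ y ^ (η' + 1)) *
            (B h x * deltaFun x₀ act c lam₀ (hstar h) ^ (η' + 1)) := by
      intro h
      have hδpos := hδ0 (hstar h)
      have hcg := hc0 (hstar h)
      have e : q h x * f (act (hstar h) x) - q h y * f (act (hstar h) y)
          = q h x * (f (act (hstar h) x) - f (act (hstar h) y))
            + (q h x - q h y) * f (act (hstar h) y) := by ring
      rw [e]
      refine (norm_add_le _ _).trans ?_
      rw [norm_mul, norm_mul]
      have t1 : ‖q h x‖ * ‖f (act (hstar h) x) - f (act (hstar h) y)‖ ≤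
          (m * dist x y * pfun x₀ lam₀ x ^ (α + η') * pfun x₀ lam₀ y ^ η') *
            (A h x * (c (hstar h) * deltaFun x₀ act c lam₀ (hstar h) ^ (2 * η'))) := by
        have d1 : dist (act (hstar h) x) (act (hstar h) y) ≤ c (hstar h) * dist x y :=
          hcLip _ _ _
        have p1 : pfun x₀ lam₀ (act (hstar h) x) ^ η' ≤
            (deltaFun x₀ act c lam₀ (hstar h) * pfun x₀ lam₀ x) ^ η' :=
          Real.rpow_le_rpow (hp0 _).le (hpact _ _) hη'.le
        have p2 : pfun x₀ lam₀ (act (hstar h) y) ^ η' ≤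
            (deltaFun x₀ act c lam₀ (hstar h) * pfun x₀ lam₀ y) ^ η' :=
          Real.rpow_le_rpow (hp0 _).le (hpact _ _) hη'.le
        have hf1 : ‖f (act (hstar h) x) - f (act (hstar h) y)‖ ≤
            m * ((c (hstar h) * dist x y) *
              ((deltaFun x₀ act c lam₀ (hstar h) * pfun x₀ lam₀ x) ^ η' *
               (deltaFun x₀ act c lam₀ (hstar h) * pfun x₀ lam₀ y) ^ η')) := by
          refine (hm _ _).trans (mul_le_mul_of_nonneg_left ?_ hm0)
          unfold wDelta
          calc dist (act (hstar h) x) (act (hstar h) y) *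
                pfun x₀ lam₀ (act (hstar h) x) ^ η' *
                pfun x₀ lam₀ (act (hstar h) y) ^ η'
              ≤ ((c (hstar h) * dist x y) *
                  (deltaFun x₀ act c lam₀ (hstar h) * pfun x₀ lam₀ x) ^ η') *
                  (deltaFun x₀ act c lam₀ (hstar h) * pfun x₀ lam₀ y) ^ η' := by
                refine mul_le_mul (mul_le_mul d1 p1 (Real.rpow_nonneg (hp0 _).le _)
                  (mul_nonneg hcg dist_nonneg)) p2 (Real.rpow_nonneg (hp0 _).le _) ?_
                exact mul_nonneg (mul_nonneg hcg dist_nonneg)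
                  (Real.rpow_nonneg (mul_nonneg hδpos.le hPpos.le) _)
            _ = (c (hstar h) * dist x y) *
                  ((deltaFun x₀ act c lam₀ (hstar h) * pfun x₀ lam₀ x) ^ η' *
                   (deltaFun x₀ act c lam₀ (hstar h) * pfun x₀ lam₀ y) ^ η') := by ring
        have hstep : ‖q h x‖ * ‖f (act (hstar h) x) - f (act (hstar h) y)‖ ≤
            (A h x * pfun x₀ lam₀ x ^ α) * (m * ((c (hstar h) * dist x y) *
              ((deltaFun x₀ act c lam₀ (hstar h) * pfun x₀ lam₀ x) ^ η' *
               (deltaFun x₀ act c lam₀ (hstar h) * pfun x₀ lam₀ y) ^ η'))) :=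
          mul_le_mul (hqA h x) hf1 (norm_nonneg _)
            (mul_nonneg (hA0 h x) (Real.rpow_nonneg hPpos.le _))
        refine hstep.trans (le_of_eq ?_)
        have hPsplit2 : pfun x₀ lam₀ x ^ (α + η')
            = pfun x₀ lam₀ x ^ α * pfun x₀ lam₀ x ^ η' := Real.rpow_add hPpos α η'
        have hδsplit : deltaFun x₀ act c lam₀ (hstar h) ^ (2 * η')
            = deltaFun x₀ act c lam₀ (hstar h) ^ η' *
              deltaFun x₀ act c lam₀ (hstar h) ^ η' := by
          rw [show 2 * η' = η' + η' by ring]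
          exact Real.rpow_add hδpos η' η'
        rw [Real.mul_rpow hδpos.le hPpos.le, Real.mul_rpow hδpos.le hQpos.le,
          hPsplit2, hδsplit]
        ring
      have t2 : ‖q h x - q h y‖ * ‖f (act (hstar h) y)‖ ≤
          (N * dist x y * pfun x₀ lam₀ x ^ β * pfun x₀ lam₀ y ^ (η' + 1)) *
            (B h x * deltaFun x₀ act c lam₀ (hstar h) ^ (η' + 1)) := by
        have hq2 : ‖q h x - q h y‖ ≤ B h x * dist x y * pfun x₀ lam₀ x ^ β :=
          hqB h x y (by rwa [dist_comm x₀ y, dist_comm x₀ x])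
        have hf2 : ‖f (act (hstar h) y)‖ ≤
            N * (deltaFun x₀ act c lam₀ (hstar h) * pfun x₀ lam₀ y) ^ (η' + 1) := by
          refine (hN _).trans (mul_le_mul_of_nonneg_left ?_ hN0)
          exact Real.rpow_le_rpow (hp0 _).le (hpact _ _) (by linarith)
        have hstep : ‖q h x - q h y‖ * ‖f (act (hstar h) y)‖ ≤
            (B h x * dist x y * pfun x₀ lam₀ x ^ β) *
              (N * (deltaFun x₀ act c lam₀ (hstar h) * pfun x₀ lam₀ y) ^ (η' + 1)) :=
          mul_le_mul hq2 hf2 (norm_nonneg _)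
            (mul_nonneg (mul_nonneg (hB0 h x) dist_nonneg)
              (Real.rpow_nonneg hPpos.le _))
        refine hstep.trans (le_of_eq ?_)
        rw [Real.mul_rpow hδpos.le hQpos.le]
        ring
      exact add_le_add t1 t2
    -- key integral inequality
    have key : ‖(∫ h, q h x * f (act (hstar h) x) ∂μ)
          - ∫ h, q h y * f (act (hstar h) y) ∂μ‖ ≤
        (m * dist x y * pfun x₀ lam₀ x ^ (α + η') * pfun x₀ lam₀ y ^ η') * I1
        + (N * dist x y * pfun x₀ lam₀ x ^ β * pfun x₀ lam₀ y ^ (η' + 1)) * I2 := by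
      rw [← integral_sub (hint x) (hint y)]
      refine (norm_integral_le_integral_norm _).trans ?_
      rw [hI1def, hI2def, ← integral_const_mul, ← integral_const_mul,
        ← integral_add ((intAc x).const_mul _) ((intB x).const_mul _)]
      exact integral_mono_of_nonneg (Eventually.of_forall fun h => norm_nonneg _)
        (((intAc x).const_mul _).add ((intB x).const_mul _)) (Eventually.of_forall hpt)
    have hwxy : wDelta x₀ lam₀ η x y
        = dist x y * pfun x₀ lam₀ x ^ η * pfun x₀ lam₀ y ^ η := rfl
    have hΔpos : 0 < wDelta x₀ lam₀ η x y := hwDpos η x y hxy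
    rw [div_le_iff₀ hΔpos, hwxy]
    have hQη : pfun x₀ lam₀ y ^ η' ≤ pfun x₀ lam₀ y ^ η :=
      Real.rpow_le_rpow_of_exponent_le hQ1 hη'η
    have hQP' : pfun x₀ lam₀ y ^ (η' + 1)
        ≤ pfun x₀ lam₀ x ^ (1:ℝ) * pfun x₀ lam₀ y ^ η := by
      have h1 : pfun x₀ lam₀ y ^ (η' + 1 - η) ≤ pfun x₀ lam₀ x ^ (1:ℝ) := by
        rw [Real.rpow_one]
        rcases le_or_gt 0 (η' + 1 - η) with he | he
        · calc pfun x₀ lam₀ y ^ (η' + 1 - η) ≤ pfun x₀ lam₀ x ^ (η' + 1 - η) :=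
              Real.rpow_le_rpow hQpos.le hQP he
            _ ≤ pfun x₀ lam₀ x ^ (1:ℝ) :=
              Real.rpow_le_rpow_of_exponent_le hP1 (by linarith)
            _ = pfun x₀ lam₀ x := Real.rpow_one _
        · calc pfun x₀ lam₀ y ^ (η' + 1 - η) ≤ 1 :=
              Real.rpow_le_one_of_one_le_of_nonpos hQ1 he.le
            _ ≤ pfun x₀ lam₀ x := hP1
      calc pfun x₀ lam₀ y ^ (η' + 1)
          = pfun x₀ lam₀ y ^ (η' + 1 - η) * pfun x₀ lam₀ y ^ η := by
            rw [← Real.rpow_add hQpos]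
            congr 1
            ring
        _ ≤ pfun x₀ lam₀ x ^ (1:ℝ) * pfun x₀ lam₀ y ^ η :=
            mul_le_mul_of_nonneg_right h1 (Real.rpow_nonneg hQpos.le _)
    have f1 : pfun x₀ lam₀ x ^ (α + η') * pfun x₀ lam₀ x ^ (η - η' - α)
        = pfun x₀ lam₀ x ^ η := by
      rw [← Real.rpow_add hPpos]
      congr 1
      ring
    have f2 : pfun x₀ lam₀ x ^ β * pfun x₀ lam₀ x ^ (1:ℝ) * pfun x₀ lam₀ x ^ (η - β - 1)
        = pfun x₀ lam₀ x ^ η := by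
      rw [← Real.rpow_add hPpos, ← Real.rpow_add hPpos]
      congr 1
      ring
    have ha1 : pfun x₀ lam₀ x ^ (η - η' - α) ≠ 0 :=
      (Real.rpow_pos_of_pos hPpos _).ne'
    have ha2 : pfun x₀ lam₀ x ^ (η - β - 1) ≠ 0 :=
      (Real.rpow_pos_of_pos hPpos _).ne'
    have u1 : (m * dist x y * pfun x₀ lam₀ x ^ (α + η') * pfun x₀ lam₀ y ^ η') * I1
        ≤ (I1 / pfun x₀ lam₀ x ^ (η - η' - α) * m) *
          (dist x y * pfun x₀ lam₀ x ^ η * pfun x₀ lam₀ y ^ η) := by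
      rw [← f1]
      have e : (I1 / pfun x₀ lam₀ x ^ (η - η' - α) * m) *
          (dist x y * (pfun x₀ lam₀ x ^ (α + η') * pfun x₀ lam₀ x ^ (η - η' - α)) *
            pfun x₀ lam₀ y ^ η)
          = (I1 * m * dist x y * pfun x₀ lam₀ x ^ (α + η')) * pfun x₀ lam₀ y ^ η := by
        field_simp
      rw [e]
      have hc1 : 0 ≤ I1 * m * dist x y * pfun x₀ lam₀ x ^ (α + η') :=
        mul_nonneg (mul_nonneg (mul_nonneg hI10 hm0) hD.le)
          (Real.rpow_nonneg hPpos.le _)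
      calc (m * dist x y * pfun x₀ lam₀ x ^ (α + η') * pfun x₀ lam₀ y ^ η') * I1
          = (I1 * m * dist x y * pfun x₀ lam₀ x ^ (α + η')) * pfun x₀ lam₀ y ^ η' := by
            ring
        _ ≤ (I1 * m * dist x y * pfun x₀ lam₀ x ^ (α + η')) * pfun x₀ lam₀ y ^ η :=
            mul_le_mul_of_nonneg_left hQη hc1
    have u2 : (N * dist x y * pfun x₀ lam₀ x ^ β * pfun x₀ lam₀ y ^ (η' + 1)) * I2
        ≤ (I2 / pfun x₀ lam₀ x ^ (η - β - 1) * N) *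
          (dist x y * pfun x₀ lam₀ x ^ η * pfun x₀ lam₀ y ^ η) := by
      rw [← f2]
      have e : (I2 / pfun x₀ lam₀ x ^ (η - β - 1) * N) *
          (dist x y * (pfun x₀ lam₀ x ^ β * pfun x₀ lam₀ x ^ (1:ℝ) *
            pfun x₀ lam₀ x ^ (η - β - 1)) * pfun x₀ lam₀ y ^ η)
          = (I2 * N * dist x y * pfun x₀ lam₀ x ^ β) *
            (pfun x₀ lam₀ x ^ (1:ℝ) * pfun x₀ lam₀ y ^ η) := by
        field_simp
      rw [e]
      have hc2 : 0 ≤ I2 * N * dist x y * pfun x₀ lam₀ x ^ β :=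
        mul_nonneg (mul_nonneg (mul_nonneg hI20 hN0) hD.le)
          (Real.rpow_nonneg hPpos.le _)
      calc (N * dist x y * pfun x₀ lam₀ x ^ β * pfun x₀ lam₀ y ^ (η' + 1)) * I2
          = (I2 * N * dist x y * pfun x₀ lam₀ x ^ β) * pfun x₀ lam₀ y ^ (η' + 1) := by
            ring
        _ ≤ (I2 * N * dist x y * pfun x₀ lam₀ x ^ β) *
            (pfun x₀ lam₀ x ^ (1:ℝ) * pfun x₀ lam₀ y ^ η) :=
            mul_le_mul_of_nonneg_left hQP' hc2
    refine key.trans ?_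
    calc (m * dist x y * pfun x₀ lam₀ x ^ (α + η') * pfun x₀ lam₀ y ^ η') * I1
        + (N * dist x y * pfun x₀ lam₀ x ^ β * pfun x₀ lam₀ y ^ (η' + 1)) * I2
        ≤ (I1 / pfun x₀ lam₀ x ^ (η - η' - α) * m) *
            (dist x y * pfun x₀ lam₀ x ^ η * pfun x₀ lam₀ y ^ η)
          + (I2 / pfun x₀ lam₀ x ^ (η - β - 1) * N) *
            (dist x y * pfun x₀ lam₀ x ^ η * pfun x₀ lam₀ y ^ η) := add_le_add u1 u2
      _ = (I1 / pfun x₀ lam₀ x ^ (η - η' - α) * m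
            + I2 / pfun x₀ lam₀ x ^ (η - β - 1) * N) *
          (dist x y * pfun x₀ lam₀ x ^ η * pfun x₀ lam₀ y ^ η) := by ring


end
end
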